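/- arXiv:math/0309317 — 11 statements merged into one kernel-verified Lean document; each statement's English description precedes it below -/
import Mathlib

section
/- Let p be an even positive integer with p ≡ 0 (mod 4) and let d ≥ 1. Then every equilateral set in ℓ_p^d has cardinality at most (p/2 − 1)·d + 1. -/
/-- A finite set `S` in `ℝ^d` is `lam`-equilateral for the `ℓ_p` norm
(`‖x‖_p = (∑ i, |x i| ^ p) ^ (1/p)`). -/
def IsEquilateralLp {d : ℕ} (p : ℝ) (lam : ℝ) (S : Finset (Fin d → ℝ)) : Prop :=
  ∀ x ∈ S, ∀ y ∈ S, x ≠ y → (∑ i, |x i - y i| ^ p) ^ (1 / p) = lam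

/-!
Write `p = 2m` with `m` even. For `x ∈ S` the vectors `(1, (x i ^ k)_{i, 1 ≤ k < m})`, which live
in a space of dimension `(m - 1) d + 1`, are linearly independent. If `∑ c_x` of them vanishes,
then every moment `∑ c_x (x i) ^ r` with `r < m` vanishes, so the binomial expansion of
`(x i - y i) ^ 2m` collapses to its middle term and
`∑_{x,y} c_x c_y ‖x - y‖_p^p = C(2m, m) ∑_i (∑_x c_x (x i) ^ m) ^ 2 ≥ 0`.
Equilaterality makes the same form equal to `-λ^p ∑ c_x ^ 2`, so `c = 0`.
-/

open Finset

section QuadraticForms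

variable {ι R : Type*} [Fintype ι] [CommRing R]

theorem sum_sum_mul_mul_sub_pow_two_mul (c a : ι → R) (m : ℕ) :
    ∑ x, ∑ y, c x * c y * (a x - a y) ^ (2 * m) =
      ∑ k ∈ range (2 * m + 1), (-1) ^ (k + 2 * m) * ((2 * m).choose k : R) *
        ((∑ x, c x * a x ^ k) * ∑ y, c y * a y ^ (2 * m - k)) := by
  calc ∑ x, ∑ y, c x * c y * (a x - a y) ^ (2 * m)
      = ∑ x, ∑ y, ∑ k ∈ range (2 * m + 1), (-1) ^ (k + 2 * m) * ((2 * m).choose k : R) *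
          ((c x * a x ^ k) * (c y * a y ^ (2 * m - k))) := by
        refine sum_congr rfl fun x _ => sum_congr rfl fun y _ => ?_
        rw [sub_pow, mul_sum]
        exact sum_congr rfl fun k _ => by ring
    _ = _ := by
        simp_rw [sum_mul_sum, mul_sum]
        exact (sum_congr rfl fun x _ => sum_comm).trans sum_comm

theorem sum_sum_mul_mul_sub_pow_two_mul_of_moments_eq_zero (c a : ι → R) (m : ℕ)
    (hmom : ∀ r < m, ∑ x, c x * a x ^ r = 0) :
    ∑ x, ∑ y, c x * c y * (a x - a y) ^ (2 * m) =
      (-1) ^ m * (2 * m).choose m * (∑ x, c x * a x ^ m) ^ 2 := by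
  rw [sum_sum_mul_mul_sub_pow_two_mul, sum_eq_single_of_mem m (mem_range.2 (by omega))]
  · rw [show 2 * m - m = m by omega, pow_add, pow_mul, neg_one_sq, one_pow]
    ring
  · intro k hk hkm
    rcases lt_or_gt_of_ne hkm with hlt | hgt
    · rw [hmom k hlt]; ring
    · rw [hmom (2 * m - k) (by rw [mem_range] at hk; omega)]; ring

theorem sum_sum_mul_mul_of_off_diag_eq [DecidableEq ι] (c : ι → R) (D : ι → ι → R) (L : R)
    (hdiag : ∀ x, D x x = 0) (hoff : ∀ x y, x ≠ y → D x y = L) :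
    ∑ x, ∑ y, c x * c y * D x y = L * ((∑ x, c x) ^ 2 - ∑ x, c x ^ 2) := by
  have hD : ∀ x y, D x y = L - if x = y then L else 0 := fun x y => by
    by_cases h : x = y
    · subst h; simp [hdiag]
    · simp [h, hoff x y h]
  simp_rw [hD, mul_sub, sum_sub_distrib, mul_ite, mul_zero, sum_ite_eq, mem_univ, if_true,
    sq, sum_mul_sum, mul_sum]
  congr 1
  · exact sum_congr rfl fun x _ => sum_congr rfl fun y _ => by ring
  · exact sum_congr rfl fun x _ => by ring

end QuadraticForms

def momentVector {d : ℕ} (m : ℕ) (x : Fin d → ℝ) : Option (Fin d × Fin (m - 1)) → ℝ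
  | none => 1
  | some (i, k) => x i ^ ((k : ℕ) + 1)

section Moments

variable {ι : Type*} [Fintype ι] {d m : ℕ} {v : ι → Fin d → ℝ} {c : ι → ℝ}

theorem moments_eq_zero_of_sum_smul_momentVector_eq_zero
    (h : ∑ x, c x • momentVector m (v x) = 0) (i : Fin d) (r : ℕ) (hr : r < m) :
    ∑ x, c x * v x i ^ r = 0 := by
  obtain rfl | ⟨k, rfl⟩ : r = 0 ∨ ∃ k, r = k + 1 := by cases r <;> simp
  · simpa [momentVector] using congrFun h none
  · simpa [momentVector] using congrFun h (some (i, ⟨k, by omega⟩))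

theorem sum_sum_mul_mul_sum_sub_pow_nonneg (hm : Even m)
    (hmom : ∀ i, ∀ r < m, ∑ x, c x * v x i ^ r = 0) :
    0 ≤ ∑ x, ∑ y, c x * c y * ∑ i, (v x i - v y i) ^ (2 * m) := by
  simp_rw [mul_sum]
  rw [(sum_congr rfl fun x _ => sum_comm).trans sum_comm]
  refine sum_nonneg fun i _ => ?_
  rw [sum_sum_mul_mul_sub_pow_two_mul_of_moments_eq_zero _ _ _ (hmom i), hm.neg_one_pow, one_mul]
  positivity

theorem linearIndependent_momentVector (hm : Even m) (hm0 : m ≠ 0) {L : ℝ} (hL : 0 < L)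
    (hv : ∀ x y, x ≠ y → ∑ i, (v x i - v y i) ^ (2 * m) = L) :
    LinearIndependent ℝ (fun x => momentVector m (v x)) := by
  classical
  rw [Fintype.linearIndependent_iff]
  intro c hc
  have hsum : ∑ x, c x = 0 := by simpa [momentVector] using congrFun hc none
  have hquad := sum_sum_mul_mul_of_off_diag_eq c (fun x y => ∑ i, (v x i - v y i) ^ (2 * m)) L
    (fun x => by simp [hm0]) hv
  have hnonneg := sum_sum_mul_mul_sum_sub_pow_nonneg hm
    (moments_eq_zero_of_sum_smul_momentVector_eq_zero hc)
  have hsq : ∑ x, c x ^ 2 = 0 := by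
    rw [hquad, hsum] at hnonneg
    have := sum_nonneg fun x (_ : x ∈ univ) => sq_nonneg (c x)
    nlinarith
  intro x
  exact pow_eq_zero_iff two_ne_zero |>.1 <|
    (sum_eq_zero_iff_of_nonneg fun y _ => sq_nonneg (c y)).1 hsq x (mem_univ x)

end Moments

theorem card_le_of_sum_sub_pow_eq {d m : ℕ} (hm : Even m) (hm0 : m ≠ 0)
    (S : Finset (Fin d → ℝ)) {L : ℝ} (hL : 0 < L)
    (hS : ∀ x ∈ S, ∀ y ∈ S, x ≠ y → ∑ i, (x i - y i) ^ (2 * m) = L) :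
    #S ≤ (m - 1) * d + 1 := by
  have hli := linearIndependent_momentVector (v := ((↑) : S → Fin d → ℝ)) hm hm0 hL
    fun x y hxy => hS x x.2 y y.2 (Subtype.coe_ne_coe.2 hxy)
  simpa [Nat.mul_comm] using hli.fintype_card_le_finrank

theorem IsEquilateralLp.sum_sub_pow_eq {d n : ℕ} {lam : ℝ} {S : Finset (Fin d → ℝ)}
    (hS : IsEquilateralLp (n : ℝ) lam S) (hn : Even n) (hn0 : n ≠ 0)
    {x y : Fin d → ℝ} (hx : x ∈ S) (hy : y ∈ S) (hxy : x ≠ y) :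
    ∑ i, (x i - y i) ^ n = lam ^ n := by
  have h := hS x hx y hy hxy
  simp_rw [Real.rpow_natCast, hn.pow_abs, one_div] at h
  rw [← h, Real.rpow_inv_natCast_pow (sum_nonneg fun i _ => hn.pow_nonneg _) hn0]

theorem equilateral_card_le_of_four_dvd_general (p d : ℕ) (hp : p % 4 = 0) (hp0 : 0 < p)
    (S : Finset (Fin d → ℝ)) (lam : ℝ) (hlam : 0 < lam)
    (hS : IsEquilateralLp (p : ℝ) lam S) :
    S.card ≤ (p / 2 - 1) * d + 1 := by
  have hp2 : p = 2 * (p / 2) := by omega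
  refine card_le_of_sum_sub_pow_eq (Nat.even_iff.2 (by omega)) (by omega) S (pow_pos hlam p)
    fun x hx y hy hxy => ?_
  rw [← hp2]
  exact hS.sum_sub_pow_eq (hp2 ▸ even_two_mul _) hp0.ne' hx hy hxy

/-- Kusner's problem, upper bound for `p ≡ 0 (mod 4)`: every equilateral set in
`ℓ_p^d` has at most `(p/2 - 1) d + 1` points. -/
theorem equilateral_card_le_of_four_dvd (p d : ℕ) (hp : p % 4 = 0) (hp0 : 0 < p)
    (hd : 1 ≤ d) (S : Finset (Fin d → ℝ)) (lam : ℝ) (hlam : 0 < lam)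
    (hS : IsEquilateralLp (p : ℝ) lam S) :
    S.card ≤ (p / 2 - 1) * d + 1 :=
  equilateral_card_le_of_four_dvd_general p d hp hp0 S lam hlam hS
end

section
/- Let p be an even positive integer with p ≡ 2 (mod 4) and let d ≥ 1. Then every equilateral set in ℓ_p^d has cardinality at most (p/2)·d + 1. -/
/-!
For `p = 2m`, the kernel `λ^p - ‖x - y‖_p^p` restricted to a `λ`-equilateral set is `λ^p` times
the identity, hence positive definite. Expanding `(x_i - y_i)^{2m}` binomially and pairing the
terms `x_i^k y_i^{2m-k}` and `x_i^{2m-k} y_i^k`, each coordinate contributes at most `m` positive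
squares (one per `0 < k < m`, plus the middle term), and `λ^p - ∑ x_i^p - ∑ y_i^p` one more. A
positive definite matrix `A - B` with `B` positive semidefinite has `A` of full rank, so the set
has at most `dm + 1` points.
-/

open Finset

/-- `K x y = ∑ j < n, a j F_j(x) F_j(y) - ∑ k, b k G_k(x) G_k(y)` with all `b k ≥ 0`: on every
finite set the Gram matrix of `K` is a matrix of rank at most `n` minus a positive semidefinite
one, so its positive index of inertia is at most `n`. -/
def PosIndexLE {V : Type*} (K : V → V → ℝ) (n : ℕ) : Prop :=
  ∃ (N : ℕ) (a : Fin n → ℝ) (F : Fin n → V → ℝ) (b : Fin N → ℝ) (G : Fin N → V → ℝ),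
    (∀ k, 0 ≤ b k) ∧ ∀ x y, K x y = ∑ j, a j * (F j x * F j y) - ∑ k, b k * (G k x * G k y)

namespace PosIndexLE

variable {V W : Type*} {K L : V → V → ℝ} {n n' : ℕ}

theorem zero : PosIndexLE (fun _ _ : V => (0 : ℝ)) 0 :=
  ⟨0, Fin.elim0, Fin.elim0, Fin.elim0, Fin.elim0, fun k => k.elim0, fun _ _ => by simp⟩

theorem add (hK : PosIndexLE K n) (hL : PosIndexLE L n') :
    PosIndexLE (fun x y => K x y + L x y) (n + n') := by
  obtain ⟨N, a, F, b, G, hb, hKF⟩ := hK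
  obtain ⟨N', a', F', b', G', hb', hLF⟩ := hL
  refine ⟨N + N', Fin.append a a', Fin.append F F', Fin.append b b', Fin.append G G',
    fun k => by cases k using Fin.addCases <;> simp [hb, hb'], fun x y => ?_⟩
  simp only [Fin.sum_univ_add, Fin.append_left, Fin.append_right, hKF, hLF]
  ring

theorem sum {ι : Type*} {K : ι → V → V → ℝ} (s : Finset ι) (h : ∀ i ∈ s, PosIndexLE (K i) n) :
    PosIndexLE (fun x y => ∑ i ∈ s, K i x y) (#s * n) := by
  induction s using Finset.cons_induction with
  | empty => simpa using zero
  | cons i s hi ih =>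
    simp only [sum_cons, card_cons, Nat.succ_mul, Nat.add_comm _ n]
    exact (h i (mem_cons_self i s)).add (ih fun j hj => h j (mem_cons_of_mem hj))

theorem comp (hK : PosIndexLE K n) (f : W → V) : PosIndexLE (fun x y => K (f x) (f y)) n := by
  obtain ⟨N, a, F, b, G, hb, hKF⟩ := hK
  exact ⟨N, a, fun j => F j ∘ f, b, fun k => G k ∘ f, hb, fun x y => hKF (f x) (f y)⟩

end PosIndexLE

section

variable {V : Type*}

theorem posIndexLE_mul_mul (c : ℝ) (u : V → ℝ) : PosIndexLE (fun x y => c * (u x * u y)) 1 :=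
  ⟨0, fun _ => c, fun _ => u, Fin.elim0, Fin.elim0, fun k => k.elim0, fun _ _ => by simp⟩

theorem posIndexLE_mul_add_mul (c : ℝ) (u v : V → ℝ) :
    PosIndexLE (fun x y => c * (u x * v y + v x * u y)) 1 := by
  rcases le_total 0 c with hc | hc
  · exact ⟨1, fun _ => c / 2, fun _ x => u x + v x, fun _ => c / 2, fun _ x => u x - v x,
      fun _ => by positivity, fun x y => by simp; ring⟩
  · exact ⟨1, fun _ => -c / 2, fun _ x => u x - v x, fun _ => -c / 2, fun _ x => u x + v x,
      fun _ => by linarith, fun x y => by simp; ring⟩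

theorem sum_sum_mul_gram {ι : Type*} [Fintype ι] (s : Finset V) (g : V → ℝ) (a : ι → ℝ)
    (F : ι → V → ℝ) :
    ∑ x ∈ s, ∑ y ∈ s, g x * g y * ∑ j, a j * (F j x * F j y)
      = ∑ j, a j * (∑ x ∈ s, g x * F j x) ^ 2 := by
  simp_rw [sq, Finset.sum_mul_sum, Finset.mul_sum]
  symm
  rw [sum_comm]
  refine sum_congr rfl fun x _ => ?_
  rw [sum_comm]
  exact sum_congr rfl fun y _ => sum_congr rfl fun j _ => by ring

theorem PosIndexLE.card_le [Fintype V] [DecidableEq V] {K : V → V → ℝ} {n : ℕ} {c : ℝ}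
    (hK : PosIndexLE K n) (hc : 0 < c) (hKc : ∀ x y, K x y = if x = y then c else 0) :
    Fintype.card V ≤ n := by
  obtain ⟨N, a, F, b, G, hb, hKF⟩ := hK
  by_contra! hlt
  have hdep : ¬ LinearIndependent ℝ (fun x j => F j x : V → Fin n → ℝ) := fun hli =>
    hlt.not_ge (by simpa using hli.fintype_card_le_finrank)
  obtain ⟨g, hg, x₀, hx₀⟩ := Fintype.not_linearIndependent_iff.1 hdep
  have hgF : ∀ j, ∑ x, g x * F j x = 0 := fun j => by simpa using congrFun hg j
  have hdiag : ∑ x, ∑ y, g x * g y * K x y = c * ∑ x, g x ^ 2 := by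
    simp [hKc, mul_sum, sq, mul_comm]
  have hgram : ∑ x, ∑ y, g x * g y * K x y = -∑ k, b k * (∑ x, g x * G k x) ^ 2 := by
    simp only [hKF, mul_sub, sum_sub_distrib, sum_sum_mul_gram, hgF]
    simp
  have hpos : 0 < c * ∑ x, g x ^ 2 :=
    mul_pos hc (sum_pos' (fun x _ => sq_nonneg _) ⟨x₀, mem_univ _, by positivity⟩)
  have hneg : 0 ≤ ∑ k, b k * (∑ x, g x * G k x) ^ 2 :=
    sum_nonneg fun k _ => mul_nonneg (hb k) (sq_nonneg _)
  linarith

end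

theorem sub_pow_two_mul {R : Type*} [CommRing R] (a b : R) (m : ℕ) :
    (a - b) ^ (2 * m) = (-1) ^ m * (2 * m).choose m * (a ^ m * b ^ m)
      + ∑ k ∈ range m,
          (-1) ^ k * (2 * m).choose k * (a ^ k * b ^ (2 * m - k) + a ^ (2 * m - k) * b ^ k) := by
  set f : ℕ → R := fun k => (-1) ^ k * (2 * m).choose k * (a ^ k * b ^ (2 * m - k)) with hf
  have hsub : (a - b) ^ (2 * m) = ∑ k ∈ range (m + (m + 1)), f k := by
    rw [sub_pow, show 2 * m + 1 = m + (m + 1) by ring]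
    refine sum_congr rfl fun k _ => ?_
    rw [hf, pow_add, pow_mul]
    simp only [neg_one_sq, one_pow, mul_one]
    ring
  have hrefl : ∀ k ∈ range m, f (m + (m + 1 - 1 - k))
      = (-1) ^ k * (2 * m).choose k * (a ^ (2 * m - k) * b ^ k) := by
    intro k hk
    have hkm : k ≤ m := (mem_range.1 hk).le
    simp only [hf]
    rw [show m + (m + 1 - 1 - k) = 2 * m - k by omega, Nat.choose_symm (by omega),
      Nat.sub_sub_self (by omega), show 2 * m - k = k + 2 * (m - k) by omega, pow_add, pow_mul]
    simp
  rw [hsub, sum_range_add, ← sum_range_reflect (fun j => f (m + j)), sum_range_succ,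
    sum_congr rfl hrefl, show m + (m + 1 - 1 - m) = m by omega]
  simp only [hf, two_mul m, Nat.add_sub_cancel, mul_add, sum_add_distrib]
  ring

theorem posIndexLE_pow_add_pow_sub_sub_pow {m : ℕ} (hm : 1 ≤ m) :
    PosIndexLE (fun a b : ℝ => a ^ (2 * m) + b ^ (2 * m) - (a - b) ^ (2 * m)) m := by
  have hK := (posIndexLE_mul_mul (-(-1) ^ m * (2 * m).choose m) (· ^ m)).add
    (PosIndexLE.sum (Ico 1 m) fun k _ =>
      posIndexLE_mul_add_mul (-(-1) ^ k * (2 * m).choose k) (· ^ k) (· ^ (2 * m - k)))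
  rw [Nat.card_Ico, mul_one, show 1 + (m - 1) = m by omega] at hK
  convert hK using 3 with a b
  rw [sub_pow_two_mul, range_eq_Ico, sum_eq_sum_Ico_succ_bot (by omega)]
  simp only [neg_mul, sum_neg_distrib, pow_zero, Nat.choose_zero_right, Nat.cast_one, mul_one,
    one_mul, tsub_zero, zero_add]
  ring

theorem posIndexLE_sub_sum_sub_pow (d : ℕ) {m : ℕ} (hm : 1 ≤ m) (c : ℝ) :
    PosIndexLE (fun x y : Fin d → ℝ => c - ∑ i, (x i - y i) ^ (2 * m)) (d * m + 1) := by
  have hK := (PosIndexLE.sum univ fun i _ =>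
      (posIndexLE_pow_add_pow_sub_sub_pow hm).comp fun x : Fin d → ℝ => x i).add
    (posIndexLE_mul_add_mul 1 (fun x : Fin d → ℝ => c / 2 - ∑ i, x i ^ (2 * m)) 1)
  rw [card_univ, Fintype.card_fin] at hK
  convert hK using 3 with x y
  simp only [sum_sub_distrib, sum_add_distrib, Pi.one_apply]
  ring

theorem IsEquilateralLp.sum_pow_eq {d p : ℕ} {lam : ℝ} {S : Finset (Fin d → ℝ)}
    (hS : IsEquilateralLp (p : ℝ) lam S) (hp : Even p) (hp0 : p ≠ 0) {x y : Fin d → ℝ}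
    (hx : x ∈ S) (hy : y ∈ S) (hxy : x ≠ y) : ∑ i, (x i - y i) ^ p = lam ^ p := by
  have hnn : 0 ≤ ∑ i, |x i - y i| ^ (p : ℝ) := sum_nonneg fun i _ => by positivity
  calc ∑ i, (x i - y i) ^ p = ∑ i, |x i - y i| ^ (p : ℝ) := by
        simp only [Real.rpow_natCast, hp.pow_abs]
    _ = ((∑ i, |x i - y i| ^ (p : ℝ)) ^ (1 / (p : ℝ))) ^ p := by
        rw [one_div, Real.rpow_inv_natCast_pow hnn hp0]
    _ = lam ^ p := by rw [hS x hx y hy hxy]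

theorem equilateral_card_le_of_mod_four_eq_two_general (p d : ℕ) (hp : p % 4 = 2)
    (S : Finset (Fin d → ℝ)) (lam : ℝ) (hlam : 0 < lam)
    (hS : IsEquilateralLp (p : ℝ) lam S) :
    S.card ≤ (p / 2) * d + 1 := by
  classical
  obtain ⟨m, rfl⟩ : ∃ m, p = 2 * m := ⟨p / 2, by omega⟩
  have hm : 1 ≤ m := by omega
  have hK := (posIndexLE_sub_sum_sub_pow d hm (lam ^ (2 * m))).comp (Subtype.val : S → _)
  have hcard := hK.card_le (pow_pos hlam (2 * m)) fun x y => by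
    split_ifs with hxy
    · simp [hxy, zero_pow (show 2 * m ≠ 0 by omega)]
    · rw [hS.sum_pow_eq (by simp) (by omega) x.2 y.2 (Subtype.coe_ne_coe.2 hxy), sub_self]
  rw [Fintype.card_coe] at hcard
  rwa [Nat.mul_div_cancel_left m two_pos, Nat.mul_comm]

/-- Kusner's problem, upper bound for `p ≡ 2 (mod 4)`: every equilateral set in
`ℓ_p^d` has at most `(p/2) d + 1` points. -/
theorem equilateral_card_le_of_mod_four_eq_two (p d : ℕ) (hp : p % 4 = 2)
    (hd : 1 ≤ d) (S : Finset (Fin d → ℝ)) (lam : ℝ) (hlam : 0 < lam)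
    (hS : IsEquilateralLp (p : ℝ) lam S) :
    S.card ≤ (p / 2) * d + 1 :=
  equilateral_card_le_of_mod_four_eq_two_general p d hp S lam hlam hS
end

section
/- For every d ≥ 1, the maximum cardinality of an equilateral set in ℓ_4^d is exactly d + 1; that is, every equilateral set in ℓ_4^d has at most d + 1 elements, and there exists an equilateral set in ℓ_4^d with d + 1 elements. -/
open Finset

lemma abs_rpow_four (a : ℝ) : |a| ^ (4:ℝ) = a ^ 4 := by
  rw [show (4:ℝ) = ((4:ℕ):ℝ) by norm_num, Real.rpow_natCast, ← abs_pow,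
    abs_of_nonneg (by positivity)]

lemma dist_pow_four {d : ℕ} {S : Finset (Fin d → ℝ)} {lam : ℝ}
    (h : IsEquilateralLp 4 lam S) {x y : Fin d → ℝ} (hx : x ∈ S) (hy : y ∈ S)
    (hxy : x ≠ y) : ∑ i, (x i - y i) ^ 4 = lam ^ 4 := by
  have h2 : ∑ i, |x i - y i| ^ (4:ℝ) = ∑ i, (x i - y i) ^ 4 :=
    Finset.sum_congr rfl fun i _ => abs_rpow_four _
  have h3 : (0:ℝ) ≤ ∑ i, (x i - y i) ^ 4 := Finset.sum_nonneg fun i _ => by positivity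
  have h4 : ((∑ i, (x i - y i) ^ 4) ^ ((1:ℝ)/4)) = lam := by rw [← h2]; exact h x hx y hy hxy
  calc ∑ i, (x i - y i) ^ 4
      = (((∑ i, (x i - y i) ^ 4) ^ ((1:ℝ)/4)) ^ (4:ℕ)) := by
        rw [← Real.rpow_natCast (((∑ i, (x i - y i)^4) ^ ((1:ℝ)/4))) 4,
          ← Real.rpow_mul h3]
        norm_num
    _ = lam ^ 4 := by rw [h4]

noncomputable section

variable {d : ℕ}

def uu (S : Finset (Fin d → ℝ)) (j : ↥S) : ℝ := ∑ i, (j.1 i)^4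
def AA (S : Finset (Fin d → ℝ)) (lam : ℝ) (j : ↥S) : ℝ := lam^2 - uu S j / lam^2
def xx (S : Finset (Fin d → ℝ)) (i : Fin d) (j : ↥S) : ℝ := j.1 i
def cc (S : Finset (Fin d → ℝ)) (i : Fin d) (j : ↥S) : ℝ := (j.1 i)^3
def ssq (S : Finset (Fin d → ℝ)) (i : Fin d) (j : ↥S) : ℝ := (j.1 i)^2
def pp (S : Finset (Fin d → ℝ)) (i : Fin d) : ℝ := Real.sqrt (∑ j : ↥S, (xx S i j)^2)
def qq (S : Finset (Fin d → ℝ)) (i : Fin d) : ℝ := Real.sqrt (∑ j : ↥S, (cc S i j)^2)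

def WM (S : Finset (Fin d → ℝ)) (lam : ℝ) : Matrix (Fin (d+1)) ↥S ℝ :=
  fun r => Fin.cases (AA S lam) (fun i j => pp S i * cc S i j + qq S i * xx S i j) r

lemma step2 (S : Finset (Fin d → ℝ)) (lam : ℝ) (hlam : 0 < lam) (j k : ↥S) :
    lam^4 - ∑ i, (j.1 i - k.1 i)^4
      = AA S lam j * AA S lam k - (uu S j / lam^2) * (uu S k / lam^2)
        + 4 * (∑ i, (cc S i j * xx S i k + xx S i j * cc S i k))
        - 6 * ∑ i, ssq S i j * ssq S i k := by
  have hexp : ∑ i, (j.1 i - k.1 i)^4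
      = (∑ i, (j.1 i)^4) + (∑ i, (k.1 i)^4)
        - 4 * (∑ i, ((j.1 i)^3 * k.1 i + j.1 i * (k.1 i)^3))
        + 6 * (∑ i, (j.1 i)^2 * (k.1 i)^2) := by
    simp only [Finset.mul_sum, ← Finset.sum_add_distrib, ← Finset.sum_sub_distrib]
    exact Finset.sum_congr rfl fun i _ => by ring
  rw [hexp]
  simp only [AA, uu, cc, xx, ssq]
  have hl : lam^2 ≠ 0 := by positivity
  field_simp
  ring

lemma e1gen {ι : Type*} [Fintype ι] (f : ι → ℝ) (v : ι → ℝ) :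
    ∑ j, ∑ k, (v j * v k) * (f j * f k) = (∑ j, f j * v j)^2 := by
  rw [sq, Finset.sum_mul_sum]
  exact Finset.sum_congr rfl fun j _ => Finset.sum_congr rfl fun k _ => by ring

lemma e3gen {ι κ : Type*} [Fintype ι] [Fintype κ] (c x : κ → ι → ℝ) (v : ι → ℝ) :
    ∑ j, ∑ k, (v j * v k) * (∑ i, (c i j * x i k + x i j * c i k))
      = 2 * ∑ i, (∑ j, c i j * v j) * (∑ j, x i j * v j) := by
  calc ∑ j, ∑ k, (v j * v k) * (∑ i, (c i j * x i k + x i j * c i k))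
      = ∑ j, ∑ k, ∑ i, ((c i j * v j) * (x i k * v k) + (x i j * v j) * (c i k * v k)) := by
        refine Finset.sum_congr rfl fun j _ => Finset.sum_congr rfl fun k _ => ?_
        rw [Finset.mul_sum]
        exact Finset.sum_congr rfl fun i _ => by ring
    _ = ∑ i, ∑ j, ∑ k, ((c i j * v j) * (x i k * v k) + (x i j * v j) * (c i k * v k)) := by
        rw [show (∑ j, ∑ k, ∑ i, ((c i j * v j) * (x i k * v k) + (x i j * v j) * (c i k * v k)))
            = ∑ j, ∑ i, ∑ k, ((c i j * v j) * (x i k * v k) + (x i j * v j) * (c i k * v k))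
          from Finset.sum_congr rfl fun j _ => Finset.sum_comm, Finset.sum_comm]
    _ = ∑ i, ((∑ j, c i j * v j) * (∑ k, x i k * v k) + (∑ j, x i j * v j) * (∑ k, c i k * v k)) := by
        refine Finset.sum_congr rfl fun i _ => ?_
        rw [Finset.sum_mul_sum, Finset.sum_mul_sum, ← Finset.sum_add_distrib]
        exact Finset.sum_congr rfl fun j _ => Finset.sum_add_distrib
    _ = 2 * ∑ i, (∑ j, c i j * v j) * (∑ j, x i j * v j) := by
        rw [Finset.mul_sum]
        exact Finset.sum_congr rfl fun i _ => by ring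

lemma e4gen {ι κ : Type*} [Fintype ι] [Fintype κ] (s : κ → ι → ℝ) (v : ι → ℝ) :
    ∑ j, ∑ k, (v j * v k) * (∑ i, s i j * s i k)
      = ∑ i, (∑ j, s i j * v j)^2 := by
  calc ∑ j, ∑ k, (v j * v k) * (∑ i, s i j * s i k)
      = ∑ j, ∑ k, ∑ i, ((s i j * v j) * (s i k * v k)) := by
        refine Finset.sum_congr rfl fun j _ => Finset.sum_congr rfl fun k _ => ?_
        rw [Finset.mul_sum]
        exact Finset.sum_congr rfl fun i _ => by ring
    _ = ∑ i, ∑ j, ∑ k, ((s i j * v j) * (s i k * v k)) := by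
        rw [show (∑ j, ∑ k, ∑ i, ((s i j * v j) * (s i k * v k)))
            = ∑ j, ∑ i, ∑ k, ((s i j * v j) * (s i k * v k))
          from Finset.sum_congr rfl fun j _ => Finset.sum_comm, Finset.sum_comm]
    _ = ∑ i, (∑ j, s i j * v j)^2 := by
        refine Finset.sum_congr rfl fun i _ => ?_
        rw [sq, Finset.sum_mul_sum]

lemma key_identity (S : Finset (Fin d → ℝ)) (lam : ℝ) (hlam : 0 < lam)
    (hS : IsEquilateralLp 4 lam S) (v : ↥S → ℝ) :
    lam^4 * ∑ j, (v j)^2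
      = (∑ j, AA S lam j * v j)^2 - (∑ j, (uu S j / lam^2) * v j)^2
        + 8 * ∑ i, (∑ j, cc S i j * v j) * (∑ j, xx S i j * v j)
        - 6 * ∑ i, (∑ j, ssq S i j * v j)^2 := by
  have step1 : ∀ j k : ↥S, (v j * v k) * (lam^4 - ∑ i, (j.1 i - k.1 i)^4)
      = if j = k then lam^4 * (v j)^2 else 0 := by
    intro j k
    by_cases h : j = k
    · subst h
      have h0 : ∑ i, ((j.1 i : ℝ) - j.1 i)^4 = 0 := by simp
      rw [h0, if_pos rfl]; ring
    · have hd := dist_pow_four hS j.2 k.2 (fun hh => h (Subtype.ext hh))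
      rw [hd, if_neg h]; ring
  calc lam^4 * ∑ j, (v j)^2
      = ∑ j, ∑ k, (v j * v k) * (lam^4 - ∑ i, (j.1 i - k.1 i)^4) := by
        rw [Finset.mul_sum]
        refine Finset.sum_congr rfl fun j _ => ?_
        rw [Finset.sum_congr rfl fun k _ => step1 j k]
        simp
    _ = ∑ j, ∑ k, (v j * v k) *
          (AA S lam j * AA S lam k - (uu S j / lam^2) * (uu S k / lam^2)
            + 4 * (∑ i, (cc S i j * xx S i k + xx S i j * cc S i k))
            - 6 * ∑ i, ssq S i j * ssq S i k) := by
        exact Finset.sum_congr rfl fun j _ => Finset.sum_congr rfl fun k _ => by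
          rw [step2 S lam hlam j k]
    _ = (∑ j, ∑ k, (v j * v k) * (AA S lam j * AA S lam k))
        - (∑ j, ∑ k, (v j * v k) * ((uu S j / lam^2) * (uu S k / lam^2)))
        + 4 * (∑ j, ∑ k, (v j * v k) * (∑ i, (cc S i j * xx S i k + xx S i j * cc S i k)))
        - 6 * (∑ j, ∑ k, (v j * v k) * (∑ i, ssq S i j * ssq S i k)) := by
        have hgen : ∀ (F G H T : ↥S → ↥S → ℝ),
            (∑ j, ∑ k, (F j k - G j k + 4 * H j k - 6 * T j k))
              = (∑ j, ∑ k, F j k) - (∑ j, ∑ k, G j k)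
                + 4 * (∑ j, ∑ k, H j k) - 6 * (∑ j, ∑ k, T j k) := by
          intro F G H T
          simp only [Finset.mul_sum, ← Finset.sum_add_distrib, ← Finset.sum_sub_distrib]
        rw [← hgen]
        exact Finset.sum_congr rfl fun j _ => Finset.sum_congr rfl fun k _ => by ring
    _ = (∑ j, AA S lam j * v j)^2 - (∑ j, (uu S j / lam^2) * v j)^2
        + 8 * ∑ i, (∑ j, cc S i j * v j) * (∑ j, xx S i j * v j)
        - 6 * ∑ i, (∑ j, ssq S i j * v j)^2 := by
        rw [e1gen (AA S lam) v, e1gen (fun j => uu S j / lam^2) v,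
          e3gen (cc S) (xx S) v, e4gen (ssq S) v]
        ring

lemma upper_bound (S : Finset (Fin d → ℝ)) (lam : ℝ) (hlam : 0 < lam)
    (hS : IsEquilateralLp 4 lam S) : S.card ≤ d + 1 := by
  classical
  have hinj : Function.Injective (WM S lam).mulVecLin := by
    rw [← LinearMap.ker_eq_bot, LinearMap.ker_eq_bot']
    intro v hv
    have hrow : ∀ r : Fin (d+1), ∑ j : ↥S, WM S lam r j * v j = 0 := by
      intro r
      simpa [Matrix.mulVecLin_apply, Matrix.mulVec, dotProduct] using
        congrFun hv r
    have h0 : ∑ j, AA S lam j * v j = 0 := by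
      have := hrow 0
      simpa [WM] using this
    have hi : ∀ i : Fin d,
        pp S i * (∑ j, cc S i j * v j) + qq S i * (∑ j, xx S i j * v j) = 0 := by
      intro i
      have := hrow i.succ
      simp only [WM, Fin.cases_succ] at this
      rw [Finset.mul_sum, Finset.mul_sum, ← Finset.sum_add_distrib]
      rw [← this]
      exact Finset.sum_congr rfl fun j _ => by ring
    have hcx : ∀ i : Fin d, (∑ j, cc S i j * v j) * (∑ j, xx S i j * v j) ≤ 0 := by
      intro i
      by_cases hx : ∑ j : ↥S, (xx S i j)^2 = 0
      · have hz : ∀ j : ↥S, xx S i j = 0 := by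
          intro j
          have := (Finset.sum_eq_zero_iff_of_nonneg
            (fun j _ => sq_nonneg (xx S i j))).mp hx j (Finset.mem_univ j)
          exact pow_eq_zero_iff two_ne_zero |>.mp this
        have : (∑ j, xx S i j * v j) = 0 :=
          Finset.sum_eq_zero fun j _ => by rw [hz j, zero_mul]
        rw [this, mul_zero]
      · have hxpos : 0 < ∑ j : ↥S, (xx S i j)^2 :=
          lt_of_le_of_ne (Finset.sum_nonneg fun j _ => sq_nonneg _) (Ne.symm hx)
        have hppos : 0 < pp S i := Real.sqrt_pos.mpr hxpos
        have hqnn : 0 ≤ qq S i := Real.sqrt_nonneg _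
        have h2 : pp S i * ((∑ j, cc S i j * v j) * (∑ j, xx S i j * v j))
            = -(qq S i * (∑ j, xx S i j * v j)^2) := by
          linear_combination (∑ j, xx S i j * v j) * (hi i)
        have h3 : pp S i * ((∑ j, cc S i j * v j) * (∑ j, xx S i j * v j)) ≤ pp S i * 0 := by
          rw [mul_zero, h2]
          exact neg_nonpos.mpr (mul_nonneg hqnn (sq_nonneg _))
        exact le_of_mul_le_mul_left h3 hppos
    have hkey := key_identity S lam hlam hS v
    have hle : lam^4 * ∑ j, (v j)^2 ≤ 0 := by
      rw [hkey, h0]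
      have t1 : (0:ℝ) ≤ (∑ j, (uu S j / lam^2) * v j)^2 := sq_nonneg _
      have t2 : ∑ i, (∑ j, cc S i j * v j) * (∑ j, xx S i j * v j) ≤ 0 :=
        Finset.sum_nonpos fun i _ => hcx i
      have t3 : (0:ℝ) ≤ ∑ i, (∑ j, ssq S i j * v j)^2 :=
        Finset.sum_nonneg fun i _ => sq_nonneg _
      nlinarith
    have hsum0 : ∑ j, (v j)^2 = 0 := by
      have hnn : (0:ℝ) ≤ ∑ j, (v j)^2 := Finset.sum_nonneg fun j _ => sq_nonneg _
      have hl4 : (0:ℝ) < lam^4 := by positivity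
      nlinarith
    funext j
    have := (Finset.sum_eq_zero_iff_of_nonneg (fun j _ => sq_nonneg (v j))).mp
      hsum0 j (Finset.mem_univ j)
    simpa using pow_eq_zero_iff two_ne_zero |>.mp this
  have hr := LinearMap.finrank_le_finrank_of_injective hinj
  simpa [Module.finrank_pi, Fintype.card_coe] using hr

end

def PT (d : ℕ) (t : ℝ) : Fin (d+1) → (Fin d → ℝ) :=
  fun m => if h : (m:ℕ) < d then (fun k => if k = ⟨(m:ℕ), h⟩ then (1:ℝ) else 0)
    else (fun _ => t)

lemma mix_sum {d : ℕ} (t : ℝ) (m₀ : Fin d) (hgt : (1-t)^4 + ((d:ℝ)-1)*t^4 = 2) :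
    ∑ k, |(if k = m₀ then (1:ℝ) else 0) - t| ^ (4:ℝ) = 2 := by
  have hpt : ∀ k : Fin d, |(if k = m₀ then (1:ℝ) else 0) - t| ^ (4:ℝ)
      = t^4 + (if k = m₀ then ((1-t)^4 - t^4) else 0) := by
    intro k
    rw [abs_rpow_four]
    by_cases ha : k = m₀ <;> simp [ha] <;> ring
  rw [Finset.sum_congr rfl fun k _ => hpt k, Finset.sum_add_distrib,
    Finset.sum_const, Finset.sum_ite_eq' Finset.univ m₀,
    if_pos (Finset.mem_univ m₀), Finset.card_univ, Fintype.card_fin,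
    nsmul_eq_mul]
  linear_combination hgt

lemma basis_sum {d : ℕ} (m₀ m₁ : Fin d) (hne : m₀ ≠ m₁) :
    ∑ k, |(if k = m₀ then (1:ℝ) else 0) - (if k = m₁ then (1:ℝ) else 0)| ^ (4:ℝ)
      = 2 := by
  have hpt : ∀ k : Fin d,
      |(if k = m₀ then (1:ℝ) else 0) - (if k = m₁ then (1:ℝ) else 0)| ^ (4:ℝ)
      = (if k = m₀ then (1:ℝ) else 0) + (if k = m₁ then (1:ℝ) else 0) := by
    intro k
    by_cases ha : k = m₀ <;> by_cases hb : k = m₁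
    · exact absurd (ha.symm.trans hb) hne
    · simp [ha, hb, hne]
    · simp [ha, hb, Ne.symm hne]
    · simp [ha, hb, Real.zero_rpow (by norm_num : (4:ℝ) ≠ 0)]
  rw [Finset.sum_congr rfl fun k _ => hpt k, Finset.sum_add_distrib]
  rw [Finset.sum_ite_eq' Finset.univ m₀, Finset.sum_ite_eq' Finset.univ m₁]
  norm_num

lemma lower_bound (d : ℕ) (hd : 1 ≤ d) :
    ∃ S : Finset (Fin d → ℝ), ∃ lam : ℝ, 0 < lam ∧
      IsEquilateralLp (4:ℝ) lam S ∧ S.card = d + 1 := by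
  classical
  have hcont : ContinuousOn (fun t : ℝ => (1 - t)^4 + ((d:ℝ) - 1) * t^4)
      (Set.Icc (-1:ℝ) 0) := by fun_prop
  have hd1 : (1:ℝ) ≤ (d:ℝ) := by exact_mod_cast hd
  have h2mem : (2:ℝ) ∈ Set.Icc ((fun t : ℝ => (1 - t)^4 + ((d:ℝ) - 1) * t^4) 0)
      ((fun t : ℝ => (1 - t)^4 + ((d:ℝ) - 1) * t^4) (-1)) := by
    constructor <;> simp <;> nlinarith
  obtain ⟨t, ht, hgt⟩ :=
    intermediate_value_Icc' (by norm_num : (-1:ℝ) ≤ 0) hcont h2mem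
  have hgt' : (1-t)^4 + ((d:ℝ)-1)*t^4 = 2 := hgt
  have ht0 : t ≤ 0 := ht.2
  have hPinj : Function.Injective (PT d t) := by
    intro m m' hmm'
    by_contra hne
    rcases lt_or_ge (m:ℕ) d with h1 | h1 <;> rcases lt_or_ge (m':ℕ) d with h2 | h2
    · have hv : (⟨(m:ℕ), h1⟩ : Fin d) ≠ ⟨(m':ℕ), h2⟩ := by
        intro h
        exact hne (Fin.ext (by simpa [Fin.ext_iff] using h))
      have := congrFun hmm' ⟨(m:ℕ), h1⟩
      simp [PT, h1, h2, hv] at this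
    · have := congrFun hmm' ⟨(m:ℕ), h1⟩
      simp [PT, h1, not_lt.mpr h2] at this
      linarith
    · have := congrFun hmm' ⟨(m':ℕ), h2⟩
      simp [PT, h2, not_lt.mpr h1] at this
      linarith
    · exact hne (Fin.ext (by have := m.isLt; have := m'.isLt; omega))
  refine ⟨Finset.image (PT d t) Finset.univ, (2:ℝ) ^ ((1:ℝ)/4),
    Real.rpow_pos_of_pos two_pos _, ?_, ?_⟩
  · intro x hx y hy hxy
    obtain ⟨m, -, rfl⟩ := Finset.mem_image.mp hx
    obtain ⟨m', -, rfl⟩ := Finset.mem_image.mp hy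
    suffices hs : ∑ k, |PT d t m k - PT d t m' k| ^ ((4:ℝ)) = 2 by rw [hs]
    rcases lt_or_ge (m:ℕ) d with h1 | h1 <;> rcases lt_or_ge (m':ℕ) d with h2 | h2
    · have hv : (⟨(m:ℕ), h1⟩ : Fin d) ≠ ⟨(m':ℕ), h2⟩ := by
        intro h
        exact hxy (by rw [Fin.ext (by simpa [Fin.ext_iff] using h : (m:ℕ) = (m':ℕ))])
      simp only [PT, dif_pos h1, dif_pos h2]
      exact basis_sum _ _ hv
    · simp only [PT, dif_pos h1, dif_neg (not_lt.mpr h2)]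
      exact mix_sum t _ hgt'
    · simp only [PT, dif_pos h2, dif_neg (not_lt.mpr h1)]
      rw [Finset.sum_congr rfl fun k _ => by rw [abs_sub_comm]]
      exact mix_sum t _ hgt'
    · exact absurd (congrArg (PT d t)
        (Fin.ext (by have := m.isLt; have := m'.isLt; omega) : m = m')) hxy
  · rw [Finset.card_image_of_injective _ hPinj, Finset.card_univ, Fintype.card_fin]


/-- The maximum cardinality of an equilateral set in `ℓ_4^d` is exactly `d + 1`. -/
theorem equilateral_max_card_l4 (d : ℕ) (hd : 1 ≤ d) :
    (∀ S : Finset (Fin d → ℝ), ∀ lam : ℝ, 0 < lam →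
      IsEquilateralLp (4 : ℝ) lam S → S.card ≤ d + 1) ∧
    (∃ S : Finset (Fin d → ℝ), ∃ lam : ℝ, 0 < lam ∧
      IsEquilateralLp (4 : ℝ) lam S ∧ S.card = d + 1) :=
  ⟨fun S lam hlam hS => upper_bound S lam hlam hS, lower_bound d hd⟩
end

section
/- Let 1 < p < ∞ and k, d ≥ 1. If there exists a 2^{1/p}-equilateral set of cardinality k + 1 contained in the unit sphere of ℓ_p^k, then there exists a 2^{1/p}-equilateral set of cardinality ⌊(1 + 1/k)·d⌋ contained in the unit sphere of ℓ_p^d. -/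
open Real

/-!
Raising `ℓ_p` norms to the `p`-th power, a `2^{1/p}`-equilateral set on the unit sphere is a set of
vectors with `∑ |x i|^p = 1` and `∑ |x i - y i|^p = 2`. Two such vectors with disjoint supports
are automatically at this distance, so such sets in `ℝ^a` and `ℝ^b` can be placed on complementary
coordinates of `ℝ^(a+b)`. Writing `d = k m + r`, glue `m` copies of the given `(k+1)`-point set in
`ℝ^k` and `r` standard basis vectors: this gives `(k+1) m + r = d + ⌊d/k⌋` points.
-/

structure IsUnitEquilateral (p : ℝ) {n : ℕ} (S : Finset (Fin n → ℝ)) : Prop where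
  sum_rpow_eq_one : ∀ x ∈ S, ∑ i, |x i| ^ p = 1
  sum_rpow_sub_eq_two : ∀ x ∈ S, ∀ y ∈ S, x ≠ y → ∑ i, |x i - y i| ^ p = 2

def HasUnitEquilateral (p : ℝ) (n c : ℕ) : Prop :=
  ∃ S : Finset (Fin n → ℝ), S.card = c ∧ IsUnitEquilateral p S

section

variable {p : ℝ} {n : ℕ}

theorem isUnitEquilateral_iff (hp : p ≠ 0) (S : Finset (Fin n → ℝ)) :
    IsUnitEquilateral p S ↔
      (∀ x ∈ S, (∑ i, |x i| ^ p) ^ (1 / p) = 1) ∧ IsEquilateralLp p ((2 : ℝ) ^ (1 / p)) S := by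
  have rpow_inj {s c : ℝ} (hs : 0 ≤ s) (hc : 0 ≤ c) : s ^ (1 / p) = c ^ (1 / p) ↔ s = c :=
    Real.rpow_left_inj hs hc (one_div_ne_zero hp)
  have sum_nonneg (f : Fin n → ℝ) : 0 ≤ ∑ i, |f i| ^ p :=
    Finset.sum_nonneg fun i _ => by positivity
  constructor
  · rintro ⟨h_one, h_two⟩
    refine ⟨fun x hx => ?_, fun x hx y hy hxy => ?_⟩
    · rw [h_one x hx, one_rpow]
    · rw [h_two x hx y hy hxy]
  · rintro ⟨h_one, h_two⟩
    refine ⟨fun x hx => ?_, fun x hx y hy hxy => ?_⟩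
    · rw [← rpow_inj (sum_nonneg x) zero_le_one, one_rpow]
      exact h_one x hx
    · exact (rpow_inj (sum_nonneg (x - y)) zero_le_two).1 (h_two x hx y hy hxy)

theorem hasUnitEquilateral_of_family (hp : 0 < p) {ι : Type*} [Fintype ι] (P : ι → Fin n → ℝ)
    (h_one : ∀ l, ∑ i, |P l i| ^ p = 1)
    (h_two : ∀ l l', l ≠ l' → ∑ i, |P l i - P l' i| ^ p = 2) :
    HasUnitEquilateral p n (Fintype.card ι) := by
  have hP : Function.Injective P := by
    intro l l' h
    by_contra hne
    simpa [h, zero_rpow hp.ne'] using h_two l l' hne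
  refine ⟨Finset.univ.image P, by rw [Finset.card_image_of_injective _ hP, Finset.card_univ], ?_, ?_⟩
  · simp only [Finset.mem_image, Finset.mem_univ, true_and, forall_exists_index,
      forall_apply_eq_imp_iff]
    exact h_one
  · simp only [Finset.mem_image, Finset.mem_univ, true_and, forall_exists_index,
      forall_apply_eq_imp_iff]
    exact fun l l' hne => h_two l l' (fun h => hne (congrArg P h))

theorem HasUnitEquilateral.append (hp : 0 < p) {a b c c' : ℕ} :
    HasUnitEquilateral p a c → HasUnitEquilateral p b c' →
      HasUnitEquilateral p (a + b) (c + c') := by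
  rintro ⟨S, rfl, hS⟩ ⟨T, rfl, hT⟩
  let P : S ⊕ T → Fin (a + b) → ℝ :=
    Sum.elim (fun x => Fin.append x.1 0) (fun y => Fin.append 0 y.1)
  rw [← Fintype.card_coe S, ← Fintype.card_coe T, ← Fintype.card_sum]
  refine hasUnitEquilateral_of_family hp P ?_ ?_
  · rintro (⟨x, hx⟩ | ⟨y, hy⟩)
      <;> simp only [P, Sum.elim_inl, Sum.elim_inr, Fin.sum_univ_add, Fin.append_left,
        Fin.append_right, Pi.zero_apply, abs_zero, zero_rpow hp.ne', Finset.sum_const_zero,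
        add_zero, zero_add]
    exacts [hS.sum_rpow_eq_one x hx, hT.sum_rpow_eq_one y hy]
  · rintro (⟨x, hx⟩ | ⟨y, hy⟩) (⟨x', hx'⟩ | ⟨y', hy'⟩) hne
      <;> simp only [P, Sum.elim_inl, Sum.elim_inr, Fin.sum_univ_add, Fin.append_left,
        Fin.append_right, Pi.zero_apply, sub_zero, zero_sub, sub_self, abs_neg, abs_zero,
        zero_rpow hp.ne', Finset.sum_const_zero, add_zero, zero_add]
    · exact hS.sum_rpow_sub_eq_two x hx x' hx' (by rintro rfl; exact hne rfl)
    · rw [hS.sum_rpow_eq_one x hx, hT.sum_rpow_eq_one y' hy', one_add_one_eq_two]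
    · rw [hS.sum_rpow_eq_one x' hx', hT.sum_rpow_eq_one y hy, one_add_one_eq_two]
    · exact hT.sum_rpow_sub_eq_two y hy y' hy' (by rintro rfl; exact hne rfl)

theorem hasUnitEquilateral_zero : HasUnitEquilateral p 0 0 :=
  ⟨∅, rfl, ⟨by simp, by simp⟩⟩

theorem hasUnitEquilateral_one : HasUnitEquilateral p 1 1 :=
  ⟨{1}, rfl, ⟨by simp, by simp⟩⟩

theorem HasUnitEquilateral.mul (hp : 0 < p) {c : ℕ} (h : HasUnitEquilateral p n c) (m : ℕ) :
    HasUnitEquilateral p (n * m) (c * m) := by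
  induction m with
  | zero => exact hasUnitEquilateral_zero
  | succ m ih => exact ih.append hp h

theorem hasUnitEquilateral_self (hp : 0 < p) (n : ℕ) : HasUnitEquilateral p n n := by
  simpa using hasUnitEquilateral_one.mul hp n

theorem HasUnitEquilateral.add_div (hp : 0 < p) {k : ℕ} (h : HasUnitEquilateral p k (k + 1))
    (d : ℕ) : HasUnitEquilateral p d (d + d / k) := by
  have hd := Nat.div_add_mod d k
  convert (h.mul hp (d / k)).append hp (hasUnitEquilateral_self hp (d % k)) using 1
  · exact hd.symm
  · rw [add_one_mul]
    omega

end

theorem floor_one_add_one_div_mul (k d : ℕ) :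
    ⌊(1 + 1 / (k : ℝ)) * d⌋ = d + (d / k : ℕ) := by
  rw [show (1 + 1 / (k : ℝ)) * d = d + d / k by ring, Int.floor_natCast_add,
    ← Int.natCast_floor_eq_floor (by positivity), Nat.floor_div_eq_div]

theorem equilateral_on_sphere_extend_general (p : ℝ) (hp : 1 < p) (k d : ℕ)
    (h : ∃ S : Finset (Fin k → ℝ), S.card = k + 1 ∧
      (∀ x ∈ S, (∑ i, |x i| ^ p) ^ (1 / p) = 1) ∧
      IsEquilateralLp p ((2 : ℝ) ^ (1 / p)) S) :
    ∃ S : Finset (Fin d → ℝ), (S.card : ℤ) = ⌊(1 + 1 / (k : ℝ)) * d⌋ ∧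
      (∀ x ∈ S, (∑ i, |x i| ^ p) ^ (1 / p) = 1) ∧
      IsEquilateralLp p ((2 : ℝ) ^ (1 / p)) S := by
  have hp₀ : 0 < p := by linarith
  obtain ⟨S, hS_card, hS⟩ := h
  obtain ⟨T, hT_card, hT⟩ :=
    HasUnitEquilateral.add_div hp₀ ⟨S, hS_card, (isUnitEquilateral_iff hp₀.ne' S).2 hS⟩ d
  exact ⟨T, by rw [hT_card, floor_one_add_one_div_mul]; push_cast; rfl,
    (isUnitEquilateral_iff hp₀.ne' T).1 hT⟩

/-- If the unit sphere of `ℓ_p^k` contains a `2^(1/p)`-equilateral set of `k + 1`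
points, then the unit sphere of `ℓ_p^d` contains a `2^(1/p)`-equilateral set of
`⌊(1 + 1/k) d⌋` points. -/
theorem equilateral_on_sphere_extend (p : ℝ) (hp : 1 < p) (k d : ℕ)
    (hk : 1 ≤ k) (hd : 1 ≤ d)
    (h : ∃ S : Finset (Fin k → ℝ), S.card = k + 1 ∧
      (∀ x ∈ S, (∑ i, |x i| ^ p) ^ (1 / p) = 1) ∧
      IsEquilateralLp p ((2 : ℝ) ^ (1 / p)) S) :
    ∃ S : Finset (Fin d → ℝ), (S.card : ℤ) = ⌊(1 + 1 / (k : ℝ)) * d⌋ ∧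
      (∀ x ∈ S, (∑ i, |x i| ^ p) ^ (1 / p) = 1) ∧
      IsEquilateralLp p ((2 : ℝ) ^ (1 / p)) S :=
  equilateral_on_sphere_extend_general p hp k d h
end

section
/- Let 1 < p < 2. For every λ ∈ [2^{1−1/p}, 2^{1/p}] there exist vectors u, v ∈ ℝ^2 with ‖u‖_p = ‖v‖_p = 1 such that ‖u + v‖_p = ‖u − v‖_p = λ. -/
/-!
The rotation `R (a, b) = (b, -a)` is a linear isometry of `ℓ_p^2` with `R ∘ R = -1`. Hence for a
unit vector `w` the pair `u = w`, `v = R w` consists of unit vectors, and `u - v = -R (u + v)`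
gives `‖u - v‖ = ‖u + v‖`. The map `w ↦ ‖w + R w‖` is continuous on the unit sphere, which is
connected, and takes the value `2^(1/p)` at `(1, 0)` and `2^(1-1/p)` at `2^(-1/p) (1, 1)`; so it
attains every value in between.
-/

open WithLp
open scoped ENNReal

section QuarterTurn

variable (p : ℝ≥0∞) [Fact (1 ≤ p)]

noncomputable def quarterTurn : PiLp p (fun _ : Fin 2 => ℝ) ≃ₗᵢ[ℝ] PiLp p (fun _ : Fin 2 => ℝ) :=
  (LinearIsometryEquiv.piLpCongrLeft p ℝ ℝ (Equiv.swap 0 1)).trans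
    (LinearIsometryEquiv.piLpCongrRight p ![.refl ℝ ℝ, .neg ℝ])

@[simp]
theorem quarterTurn_apply (u : PiLp p (fun _ : Fin 2 => ℝ)) :
    quarterTurn p u = toLp p ![u 1, -u 0] := by
  ext i
  fin_cases i <;> simp [quarterTurn, LinearIsometryEquiv.piLpCongrLeft_apply,
    LinearIsometryEquiv.piLpCongrRight_apply, Equiv.piCongrLeft']

theorem quarterTurn_quarterTurn (u : PiLp p (fun _ : Fin 2 => ℝ)) :
    quarterTurn p (quarterTurn p u) = -u := by
  ext i
  fin_cases i <;> simp

theorem add_quarterTurn_toLp (a b : ℝ) :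
    toLp p ![a, b] + quarterTurn p (toLp p ![a, b]) = toLp p ![a + b, b - a] := by
  ext i
  fin_cases i <;> simp [sub_eq_add_neg]

end QuarterTurn

theorem LinearIsometry.norm_sub_apply_eq_norm_add_apply {R E : Type*} [Semiring R]
    [SeminormedAddCommGroup E] [Module R E] (f : E →ₗᵢ[R] E) (hf : ∀ x, f (f x) = -x) (x : E) :
    ‖x - f x‖ = ‖x + f x‖ := by
  rw [norm_sub_rev, sub_eq_add_neg, ← hf, ← map_add, add_comm, f.norm_map]

theorem rank_piLp_fin (p : ℝ≥0∞) (n : ℕ) :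
    Module.rank ℝ (PiLp p (fun _ : Fin n => ℝ)) = n :=
  (WithLp.linearEquiv p ℝ (Fin n → ℝ)).rank_eq.trans (rank_fin_fun n)

theorem PiLp.norm_ofReal_eq_sum_abs_rpow {ι : Type*} [Fintype ι] {p : ℝ} (hp : 0 < p)
    (x : PiLp (ENNReal.ofReal p) fun _ : ι => ℝ) : ‖x‖ = (∑ i, |x i| ^ p) ^ (1 / p) := by
  rw [PiLp.norm_eq_sum (by rwa [ENNReal.toReal_ofReal hp.le]), ENNReal.toReal_ofReal hp.le]
  simp only [Real.norm_eq_abs]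

theorem exists_norm_eq_one_apply_eq_of_mem_Icc {E : Type*} [NormedAddCommGroup E]
    [NormedSpace ℝ E] (hE : 1 < Module.rank ℝ E) {f : E → ℝ} (hf : Continuous f) {a b : E}
    (ha : ‖a‖ = 1) (hb : ‖b‖ = 1) {y : ℝ} (hy : y ∈ Set.Icc (f a) (f b)) :
    ∃ v, ‖v‖ = 1 ∧ f v = y := by
  obtain ⟨v, hv, hfv⟩ := (isPreconnected_sphere hE 0 1).intermediate_value
    (mem_sphere_zero_iff_norm.2 ha) (mem_sphere_zero_iff_norm.2 hb) hf.continuousOn hy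
  exact ⟨v, mem_sphere_zero_iff_norm.1 hv, hfv⟩

theorem exists_norm_eq_one_norm_add_quarterTurn_eq {p : ℝ} [Fact (1 ≤ ENNReal.ofReal p)]
    {lam : ℝ} (hlam : lam ∈ Set.Icc ((2 : ℝ) ^ (1 - 1 / p)) ((2 : ℝ) ^ (1 / p))) :
    ∃ w : PiLp (ENNReal.ofReal p) (fun _ : Fin 2 => ℝ),
      ‖w‖ = 1 ∧ ‖w + quarterTurn (ENNReal.ofReal p) w‖ = lam := by
  have hp : 0 < p :=
    zero_lt_one.trans_le (ENNReal.one_le_ofReal.1 (Fact.out : 1 ≤ ENNReal.ofReal p))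
  have hpair (a b : ℝ) : ‖toLp (ENNReal.ofReal p) ![a, b]‖ = (|a| ^ p + |b| ^ p) ^ (1 / p) := by
    simp only [PiLp.norm_ofReal_eq_sum_abs_rpow hp, Fin.sum_univ_two]
    rfl
  set x := toLp (ENNReal.ofReal p) ![(1 : ℝ), 0]
  set y := toLp (ENNReal.ofReal p) ![(1 : ℝ), 1]
  have hx : ‖x‖ = 1 := by simp [x, hpair, hp.ne']
  have hxR : ‖x + quarterTurn _ x‖ = 2 ^ (1 / p) := by
    rw [add_quarterTurn_toLp, hpair]
    norm_num
  have hy : ‖y‖ = 2 ^ (1 / p) := by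
    rw [hpair]
    norm_num
  have hyR : ‖y + quarterTurn _ y‖ = 2 := by
    rw [add_quarterTurn_toLp, hpair]
    norm_num [hp.ne']
  set c : ℝ := (2 ^ (1 / p))⁻¹
  have hc : 0 < c := by positivity
  refine exists_norm_eq_one_apply_eq_of_mem_Icc (by rw [rank_piLp_fin]; norm_num)
    (f := fun w => ‖w + quarterTurn _ w‖) (by fun_prop) (a := c • y) (b := x) ?_ hx ?_
  · rw [norm_smul, Real.norm_of_nonneg hc.le, hy, inv_mul_cancel₀ (by positivity)]
  · rw [Real.rpow_sub two_pos, Real.rpow_one, div_eq_inv_mul] at hlam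
    rwa [map_smul, ← smul_add, norm_smul, Real.norm_of_nonneg hc.le, hyR, hxR]

theorem exists_unit_vectors_sum_diff_eq_general (p : ℝ) (hp1 : 1 < p)
    (lam : ℝ) (hlam : lam ∈ Set.Icc ((2 : ℝ) ^ (1 - 1 / p)) ((2 : ℝ) ^ (1 / p))) :
    ∃ u v : Fin 2 → ℝ,
      (∑ i, |u i| ^ p) ^ (1 / p) = 1 ∧
      (∑ i, |v i| ^ p) ^ (1 / p) = 1 ∧
      (∑ i, |u i + v i| ^ p) ^ (1 / p) = lam ∧
      (∑ i, |u i - v i| ^ p) ^ (1 / p) = lam := by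
  have : Fact (1 ≤ ENNReal.ofReal p) := ⟨ENNReal.one_le_ofReal.2 hp1.le⟩
  set R := quarterTurn (ENNReal.ofReal p)
  obtain ⟨w, hw, hw_lam⟩ := exists_norm_eq_one_norm_add_quarterTurn_eq hlam
  have hnorm := PiLp.norm_ofReal_eq_sum_abs_rpow (ι := Fin 2) (zero_lt_one.trans hp1)
  have hsub := R.toLinearIsometry.norm_sub_apply_eq_norm_add_apply (quarterTurn_quarterTurn _) w
  refine ⟨ofLp w, ofLp (R w), ?_, ?_, ?_, ?_⟩
  · exact (hnorm w).symm.trans hw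
  · exact (hnorm (R w)).symm.trans (R.norm_map w ▸ hw)
  · exact (hnorm (w + R w)).symm.trans hw_lam
  · exact (hnorm (w - R w)).symm.trans (hsub.trans hw_lam)

/-- For `1 < p < 2` and any `λ ∈ [2^(1-1/p), 2^(1/p)]` there are unit vectors
`u, v` in `ℓ_p^2` with `‖u + v‖_p = ‖u - v‖_p = λ`. -/
theorem exists_unit_vectors_sum_diff_eq (p : ℝ) (hp1 : 1 < p) (hp2 : p < 2)
    (lam : ℝ) (hlam : lam ∈ Set.Icc ((2 : ℝ) ^ (1 - 1 / p)) ((2 : ℝ) ^ (1 / p))) :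
    ∃ u v : Fin 2 → ℝ,
      (∑ i, |u i| ^ p) ^ (1 / p) = 1 ∧
      (∑ i, |v i| ^ p) ^ (1 / p) = 1 ∧
      (∑ i, |u i + v i| ^ p) ^ (1 / p) = lam ∧
      (∑ i, |u i - v i| ^ p) ^ (1 / p) = lam :=
  exists_unit_vectors_sum_diff_eq_general p hp1 lam hlam
end

section
/- Suppose there exists a Hadamard matrix of order k, where k ≥ 2. Then for every real p with 2 + log(1 − k^{−1})/log 2 ≤ p ≤ 2 + log(1 − (2k)^{−1})/log 2 and p ≠ 1, there exists a 2^{1/p}-equilateral set of cardinality 2k contained in the unit sphere of ℓ_p^{2k−1}. -/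
open Real

private lemma coordAbs (p x y e e' : ℝ) (hx : 0 ≤ x) (hy : 0 ≤ y)
    (he : e = 1 ∨ e = -1) (he' : e' = 1 ∨ e' = -1) :
    |x * e - y * e'| ^ p
      = ((x + y) ^ p + |x - y| ^ p) / 2 - ((x + y) ^ p - |x - y| ^ p) / 2 * (e * e') := by
  rcases he with rfl | rfl <;> rcases he' with rfl | rfl
  · simp only [mul_one]; ring
  · rw [mul_one, mul_neg_one, sub_neg_eq_add, abs_of_nonneg (by linarith : (0:ℝ) ≤ x + y)]
    ring
  · rw [mul_neg_one, mul_one, show -x - y = -(x + y) from by ring, abs_neg,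
      abs_of_nonneg (by linarith : (0:ℝ) ≤ x + y)]
    ring
  · rw [mul_neg_one, mul_neg_one, show -x - -y = -(x - y) from by ring, abs_neg]
    ring

set_option maxHeartbeats 1000000

/-- If a Hadamard matrix of order `k ≥ 2` exists, then for any
`p ∈ [2 + log(1 - 1/k)/log 2, 2 + log(1 - 1/(2k))/log 2]` with `p ≠ 1`,
the unit sphere of `ℓ_p^(2k-1)` contains a `2^(1/p)`-equilateral set of `2k` points. -/
theorem hadamard_equilateral_on_sphere (k : ℕ) (hk : 2 ≤ k)
    (H : Matrix (Fin k) (Fin k) ℝ)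
    (hentries : ∀ i j, H i j = 1 ∨ H i j = -1)
    (hHad : H * H.transpose = (k : ℝ) • (1 : Matrix (Fin k) (Fin k) ℝ))
    (p : ℝ) (hp1 : 2 + Real.log (1 - (k : ℝ)⁻¹) / Real.log 2 ≤ p)
    (hp2 : p ≤ 2 + Real.log (1 - ((2 * k : ℕ) : ℝ)⁻¹) / Real.log 2)
    (hp : p ≠ 1) :
    ∃ S : Finset (Fin (2 * k - 1) → ℝ), S.card = 2 * k ∧
      (∀ x ∈ S, (∑ i, |x i| ^ p) ^ (1 / p) = 1) ∧
      IsEquilateralLp p ((2 : ℝ) ^ (1 / p)) S := by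
  -- ## basic facts
  have hkR2 : (2:ℝ) ≤ (k:ℝ) := by exact_mod_cast hk
  have hkRpos : (0:ℝ) < (k:ℝ) := by linarith
  have hkne : (k:ℝ) ≠ 0 := ne_of_gt hkRpos
  have hlog2 : (0:ℝ) < Real.log 2 := Real.log_pos one_lt_two
  have hkinv : (k:ℝ)⁻¹ ≤ 1/2 := by
    rw [← one_div]; exact one_div_le_one_div_of_le (by norm_num) hkR2
  have h1kpos : (0:ℝ) < 1 - (k:ℝ)⁻¹ := by linarith
  have hc2k : ((2*k : ℕ):ℝ) = 2*(k:ℝ) := by push_cast; ring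
  have h2kinv : ((2*k:ℕ):ℝ)⁻¹ ≤ 1/2 := by
    rw [← one_div]
    exact one_div_le_one_div_of_le (by norm_num) (by rw [hc2k]; linarith)
  have h2kpos : (0:ℝ) < 1 - ((2*k:ℕ):ℝ)⁻¹ := by linarith
  -- ## exponent inequalities
  have e1 : Real.log (1 - (k:ℝ)⁻¹) ≤ (p-2)*Real.log 2 := by
    have h2 : Real.log (1 - (k:ℝ)⁻¹)/Real.log 2 ≤ p - 2 := by linarith
    calc Real.log (1 - (k:ℝ)⁻¹)
        = (Real.log (1-(k:ℝ)⁻¹)/Real.log 2)*Real.log 2 := by field_simp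
      _ ≤ (p-2)*Real.log 2 := mul_le_mul_of_nonneg_right h2 hlog2.le
  have e2 : 1 - (k:ℝ)⁻¹ ≤ 2^(p-2) := by
    rw [Real.rpow_def_of_pos two_pos]
    calc 1 - (k:ℝ)⁻¹ = Real.exp (Real.log (1 - (k:ℝ)⁻¹)) := (Real.exp_log h1kpos).symm
      _ ≤ Real.exp ((p-2)*Real.log 2) := Real.exp_le_exp.mpr e1
      _ = Real.exp (Real.log 2 * (p-2)) := by rw [mul_comm]
  have e3' : (p-2)*Real.log 2 ≤ Real.log (1 - ((2*k:ℕ):ℝ)⁻¹) := by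
    have h2 : p - 2 ≤ Real.log (1 - ((2*k:ℕ):ℝ)⁻¹)/Real.log 2 := by linarith
    calc (p-2)*Real.log 2
        ≤ (Real.log (1 - ((2*k:ℕ):ℝ)⁻¹)/Real.log 2)*Real.log 2 :=
          mul_le_mul_of_nonneg_right h2 hlog2.le
      _ = Real.log (1 - ((2*k:ℕ):ℝ)⁻¹) := by field_simp
  have e3 : 2^(p-2) ≤ 1 - ((2*k:ℕ):ℝ)⁻¹ := by
    rw [Real.rpow_def_of_pos two_pos]
    calc Real.exp (Real.log 2*(p-2)) = Real.exp ((p-2)*Real.log 2) := by rw [mul_comm]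
      _ ≤ Real.exp (Real.log (1 - ((2*k:ℕ):ℝ)⁻¹)) := Real.exp_le_exp.mpr e3'
      _ = 1 - ((2*k:ℕ):ℝ)⁻¹ := Real.exp_log h2kpos
  have hp_ge1 : 1 ≤ p := by
    have h12 : (2:ℝ)^(-1:ℝ) ≤ 2^(p-2) := by
      calc (2:ℝ)^(-1:ℝ) = 2⁻¹ := by
            rw [Real.rpow_neg_one]
        _ ≤ 1 - (k:ℝ)⁻¹ := by rw [show (2:ℝ)⁻¹ = 1/2 from by norm_num]; linarith
        _ ≤ 2^(p-2) := e2
    have := (Real.rpow_le_rpow_left_iff one_lt_two).mp h12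
    linarith
  have hp_gt1 : 1 < p := lt_of_le_of_ne hp_ge1 (Ne.symm hp)
  have hp_pos : 0 < p := by linarith
  have hp0 : p ≠ 0 := ne_of_gt hp_pos
  have h22 : (2:ℝ) ^ (2:ℝ) = 4 := by
    have h := Real.rpow_natCast (2:ℝ) 2
    rw [Nat.cast_ofNat] at h
    rw [h]; norm_num
  have h2ge : (2:ℝ) ≤ 2 ^ p := by
    calc (2:ℝ) = 2^(1:ℝ) := (Real.rpow_one 2).symm
      _ ≤ 2^p := (Real.rpow_le_rpow_left_iff one_lt_two).mpr hp_ge1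
  have key2 : (2:ℝ) ^ p ≤ 4 - 2*(k:ℝ)⁻¹ := by
    have h4 : (2:ℝ)^p = 2^(p-2)*4 := by
      rw [← h22, ← Real.rpow_add two_pos, show p-2+2 = p from by ring]
    calc (2:ℝ)^p = 2^(p-2)*4 := h4
      _ ≤ (1 - ((2*k:ℕ):ℝ)⁻¹)*4 := mul_le_mul_of_nonneg_right e3 (by norm_num)
      _ = 4 - 2*(k:ℝ)⁻¹ := by rw [hc2k]; field_simp; ring
  have hcancel : ∀ x : ℝ, 0 ≤ x → (x ^ (1/p)) ^ p = x := by
    intro x hx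
    rw [← Real.rpow_mul hx, one_div, inv_mul_cancel₀ hp0, Real.rpow_one]
  have hcancel2 : ∀ x : ℝ, 0 ≤ x → (x ^ p) ^ (1/p) = x := by
    intro x hx
    rw [← Real.rpow_mul hx, mul_one_div, div_self hp0, Real.rpow_one]
  -- ## dimensions
  set m : ℕ := k - 1 with hmdef
  have hmk : m + 1 = k := by omega
  have hm1 : (m:ℝ) + 1 = (k:ℝ) := by exact_mod_cast hmk
  have hN : m + (1 + m) = 2*k - 1 := by omega
  -- ## scalar construction (IVT)
  obtain ⟨a, b, u, ha0, hb0, hu0, hba, hI, hII, hIII⟩ :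
      ∃ a b u : ℝ, 0 ≤ a ∧ 0 ≤ b ∧ 0 ≤ u ∧ b ≤ a ∧
        ((m:ℝ) * (a ^ p + b ^ p) + u ^ p = 1) ∧
        (((m:ℝ) + 1) * ((2*a) ^ p + (2*b) ^ p) / 2 = 2) ∧
        ((m:ℝ) * ((a + b) ^ p + (a - b) ^ p) + (2*u) ^ p = 2) := by
    set S : ℝ := 2 ^ (2-p) / (k:ℝ) with hSdef
    have hSpos : 0 < S := div_pos (Real.rpow_pos_of_pos two_pos _) hkRpos
    have h2pS : (2:ℝ)^p * S = 4 * (k:ℝ)⁻¹ := by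
      rw [hSdef, div_eq_mul_inv, ← mul_assoc, ← Real.rpow_add two_pos,
        show p + (2-p) = 2 from by ring, h22]
    have hmR : (m:ℝ) = (k:ℝ) - 1 := by linarith
    have hmS : (m:ℝ) * S ≤ 1 := by
      have hpow : (2:ℝ)^(p-2) * 2^(2-p) = 1 := by
        rw [← Real.rpow_add two_pos, show p-2+(2-p) = 0 from by ring, Real.rpow_zero]
      have h1 : (1 - (k:ℝ)⁻¹) * 2^(2-p) ≤ 2^(p-2) * 2^(2-p) :=
        mul_le_mul_of_nonneg_right e2 (Real.rpow_nonneg (by norm_num) _)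
      calc (m:ℝ)*S = (1 - (k:ℝ)⁻¹) * 2^(2-p) := by
            rw [hSdef, hmR]; field_simp
        _ ≤ 2^(p-2) * 2^(2-p) := h1
        _ = 1 := hpow
    have hmS2p : (m:ℝ) * ((2:ℝ)^p * S) = 4 - 4*(k:ℝ)⁻¹ := by
      rw [h2pS, hmR]
      have hkinv1 : (k:ℝ)*(k:ℝ)⁻¹ = 1 := mul_inv_cancel₀ hkne
      linear_combination (4:ℝ)*hkinv1
    set U : ℝ := 1 - (m:ℝ)*S with hUdef
    have hU0 : 0 ≤ U := by rw [hUdef]; linarith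
    set u : ℝ := U ^ (1/p) with hudef
    have hu0 : 0 ≤ u := Real.rpow_nonneg hU0 _
    have hup : u ^ p = U := by rw [hudef]; exact hcancel U hU0
    set t₁ : ℝ := (S/2) ^ (1/p) with ht1def
    have ht₁0 : 0 ≤ t₁ := Real.rpow_nonneg (by positivity) _
    have ht₁p : t₁ ^ p = S/2 := by rw [ht1def]; exact hcancel _ (by positivity)
    have hcont : ContinuousOn
        (fun t : ℝ => (m:ℝ)*(((S - t^p)^(1/p) + t)^p + ((S - t^p)^(1/p) - t)^p) + 2^p*U)
        (Set.Icc 0 t₁) := by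
      apply Continuous.continuousOn
      have c1 : Continuous fun t:ℝ => t^p :=
        continuous_id.rpow_const (fun x => Or.inr hp_pos.le)
      have c2 : Continuous fun t:ℝ => (S - t^p)^(1/p) :=
        (continuous_const.sub c1).rpow_const (fun x => Or.inr (by positivity))
      exact (continuous_const.mul
        (((c2.add continuous_id).rpow_const (fun x => Or.inr hp_pos.le)).add
          ((c2.sub continuous_id).rpow_const (fun x => Or.inr hp_pos.le)))).add continuous_const
    have hval1 : (m:ℝ)*(((S - t₁^p)^(1/p) + t₁)^p + ((S - t₁^p)^(1/p) - t₁)^p) + 2^p*U ≤ 2 := by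
      rw [ht₁p, show S - S/2 = S/2 from by ring, ← ht1def,
        show t₁ + t₁ = 2*t₁ from by ring, sub_self, Real.zero_rpow hp0,
        Real.mul_rpow (by norm_num : (0:ℝ) ≤ 2) ht₁0, ht₁p]
      have hexp : (2:ℝ)^p*U = 2^p - (m:ℝ)*((2:ℝ)^p*S) := by rw [hUdef]; ring
      linarith [hmS2p, key2, hexp]
    have hval0 : 2 ≤ (m:ℝ)*(((S - (0:ℝ)^p)^(1/p) + 0)^p + ((S - (0:ℝ)^p)^(1/p) - 0)^p) + 2^p*U := by
      rw [Real.zero_rpow hp0, sub_zero, add_zero, sub_zero, hcancel S hSpos.le]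
      have h1 : 0 ≤ ((2:ℝ)^p - 2)*U := mul_nonneg (by linarith) hU0
      have h2 : (m:ℝ)*S = 1 - U := by rw [hUdef]; ring
      linarith [h1, h2]
    obtain ⟨t, htmem, hgt⟩ :=
      intermediate_value_Icc' ht₁0 hcont (Set.mem_Icc.mpr ⟨hval1, hval0⟩)
    have hgt' : (m:ℝ)*(((S - t^p)^(1/p) + t)^p + ((S - t^p)^(1/p) - t)^p) + 2^p*U = 2 := hgt
    have ht0 : 0 ≤ t := htmem.1
    have htp : t^p ≤ S/2 := by
      calc t^p ≤ t₁^p := Real.rpow_le_rpow ht0 htmem.2 hp_pos.le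
        _ = S/2 := ht₁p
    set a : ℝ := (S - t^p)^(1/p) with hadef
    have hap : a^p = S - t^p := by rw [hadef]; exact hcancel _ (by linarith)
    have ha0 : 0 ≤ a := by rw [hadef]; exact Real.rpow_nonneg (by linarith) _
    have hta : t ≤ a := by
      have h1 : t^p ≤ S - t^p := by linarith
      calc t = (t^p)^(1/p) := (hcancel2 t ht0).symm
        _ ≤ (S - t^p)^(1/p) := Real.rpow_le_rpow (Real.rpow_nonneg ht0 p) h1 (by positivity)
        _ = a := by rw [hadef]
    have hsumS : a^p + t^p = S := by rw [hap]; ring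
    refine ⟨a, t, u, ha0, ht0, hu0, hta, ?_, ?_, ?_⟩
    · rw [hsumS, hup, hUdef]; ring
    · rw [Real.mul_rpow (by norm_num : (0:ℝ) ≤ 2) ha0,
        Real.mul_rpow (by norm_num : (0:ℝ) ≤ 2) ht0, hm1]
      calc (k:ℝ) * ((2:ℝ)^p*a^p + (2:ℝ)^p*t^p)/2 = (k:ℝ)*((2:ℝ)^p*S)/2 := by
            rw [← hsumS]; ring
        _ = (k:ℝ)*(4*(k:ℝ)⁻¹)/2 := by rw [h2pS]
        _ = 2 := by field_simp; norm_num
    · have h2u : (2*u)^p = (2:ℝ)^p * U := by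
        rw [Real.mul_rpow (by norm_num : (0:ℝ) ≤ 2) hu0, hup]
      rw [h2u]
      exact hgt'
  -- ## the Hadamard simplex vectors
  obtain ⟨hh, hvals, horth⟩ :
      ∃ hh : Fin k → Fin m → ℝ, (∀ j i, hh j i = 1 ∨ hh j i = -1) ∧
        ∀ j j', j ≠ j' → (∑ i, hh j i * hh j' i) = -1 := by
    have ec : Fin (m+1) ≃ Fin k := finCongr hmk
    refine ⟨fun j i => H j (ec i.succ) * H j (ec 0), ?_, ?_⟩
    · intro j i
      show H j (ec i.succ) * H j (ec 0) = 1 ∨ H j (ec i.succ) * H j (ec 0) = -1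
      rcases hentries j (ec i.succ) with h1|h1 <;> rcases hentries j (ec 0) with h2|h2 <;>
        rw [h1, h2] <;> norm_num
    · intro j j' hne
      show ∑ i : Fin m, (H j (ec i.succ) * H j (ec 0)) * (H j' (ec i.succ) * H j' (ec 0)) = -1
      have horth0 : ∑ c : Fin k, H j c * H j' c = 0 := by
        have h := congrFun (congrFun hHad j) j'
        rw [Matrix.mul_apply] at h
        simp only [Matrix.transpose_apply, Matrix.smul_apply, Matrix.one_apply_ne hne,
          smul_zero] at h
        exact h
      have hsq : (H j (ec 0) * H j' (ec 0)) * (H j (ec 0) * H j' (ec 0)) = 1 := by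
        rcases hentries j (ec 0) with h1|h1 <;> rcases hentries j' (ec 0) with h2|h2 <;>
          rw [h1, h2] <;> norm_num
      have hsplit : ∑ l : Fin (m+1), H j (ec l) * H j' (ec l) = 0 := by
        rw [Equiv.sum_comp ec (fun c => H j c * H j' c)]
        exact horth0
      have hsucc : ∑ l : Fin (m+1), H j (ec l) * H j' (ec l)
          = H j (ec 0) * H j' (ec 0) + ∑ i : Fin m, H j (ec i.succ) * H j' (ec i.succ) :=
        Fin.sum_univ_succ _
      have htail : ∑ i : Fin m, H j (ec i.succ) * H j' (ec i.succ)
          = -(H j (ec 0) * H j' (ec 0)) := by linarith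
      calc ∑ i : Fin m, (H j (ec i.succ) * H j (ec 0)) * (H j' (ec i.succ) * H j' (ec 0))
          = ∑ i : Fin m, (H j (ec i.succ) * H j' (ec i.succ)) * (H j (ec 0) * H j' (ec 0)) :=
            Finset.sum_congr rfl (fun i _ => by ring)
        _ = (∑ i : Fin m, H j (ec i.succ) * H j' (ec i.succ)) * (H j (ec 0) * H j' (ec 0)) :=
            (Finset.sum_mul _ _ _).symm
        _ = (-(H j (ec 0) * H j' (ec 0))) * (H j (ec 0) * H j' (ec 0)) := by rw [htail]
        _ = -1 := by linear_combination -hsq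
  have habs1 : ∀ j i, |hh j i| = 1 := by
    intro j i; rcases hvals j i with h|h <;> rw [h] <;> norm_num
  have hvals_neg : ∀ j i, -hh j i = 1 ∨ -hh j i = -1 := by
    intro j i
    rcases hvals j i with h|h
    · right; rw [h]
    · left; rw [h]; norm_num
  have horthn : ∀ j j', j ≠ j' → ∑ i : Fin m, hh j i * -hh j' i = 1 := by
    intro j j' h
    calc ∑ i : Fin m, hh j i * -hh j' i
        = ∑ i : Fin m, -(hh j i * hh j' i) := Finset.sum_congr rfl (fun i _ => by ring)
      _ = -∑ i : Fin m, hh j i * hh j' i := by rw [Finset.sum_neg_distrib]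
      _ = 1 := by rw [horth j j' h]; norm_num
  -- ## block sum lemmas
  have block_norm : ∀ (j : Fin k) (x : ℝ), 0 ≤ x →
      ∑ i : Fin m, |x * hh j i| ^ p = (m:ℝ) * x ^ p := by
    intro j x hx
    calc ∑ i : Fin m, |x * hh j i|^p = ∑ _i : Fin m, x^p :=
          Finset.sum_congr rfl (fun i _ => by rw [abs_mul, habs1, mul_one, abs_of_nonneg hx])
      _ = (m:ℝ)*x^p := by
          rw [Finset.sum_const, Finset.card_univ, Fintype.card_fin, nsmul_eq_mul]
  have block_same_sub : ∀ (j : Fin k) (x y : ℝ),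
      ∑ i : Fin m, |x * hh j i - y * hh j i| ^ p = (m:ℝ) * |x - y| ^ p := by
    intro j x y
    calc ∑ i : Fin m, |x*hh j i - y*hh j i|^p = ∑ _i : Fin m, |x-y|^p :=
          Finset.sum_congr rfl (fun i _ => by
            rw [show x*hh j i - y*hh j i = (x-y)*hh j i from by ring, abs_mul, habs1, mul_one])
      _ = (m:ℝ)*|x-y|^p := by
          rw [Finset.sum_const, Finset.card_univ, Fintype.card_fin, nsmul_eq_mul]
  have block_same_add : ∀ (j : Fin k) (x y : ℝ),
      ∑ i : Fin m, |x * hh j i + y * hh j i| ^ p = (m:ℝ) * |x + y| ^ p := by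
    intro j x y
    calc ∑ i : Fin m, |x*hh j i + y*hh j i|^p = ∑ _i : Fin m, |x+y|^p :=
          Finset.sum_congr rfl (fun i _ => by
            rw [show x*hh j i + y*hh j i = (x+y)*hh j i from by ring, abs_mul, habs1, mul_one])
      _ = (m:ℝ)*|x+y|^p := by
          rw [Finset.sum_const, Finset.card_univ, Fintype.card_fin, nsmul_eq_mul]
  have block_mix_sub : ∀ (j j' : Fin k), j ≠ j' → ∀ x y : ℝ, 0 ≤ x → 0 ≤ y →
      ∑ i : Fin m, |x * hh j i - y * hh j' i| ^ p
        = (m:ℝ) * (((x+y)^p + |x-y|^p)/2) + ((x+y)^p - |x-y|^p)/2 := by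
    intro j j' h x y hx hy
    calc ∑ i : Fin m, |x*hh j i - y*hh j' i|^p
        = ∑ i : Fin m, (((x+y)^p + |x-y|^p)/2 - ((x+y)^p - |x-y|^p)/2 * (hh j i * hh j' i)) :=
          Finset.sum_congr rfl (fun i _ =>
            coordAbs p x y (hh j i) (hh j' i) hx hy (hvals j i) (hvals j' i))
      _ = (m:ℝ)*(((x+y)^p + |x-y|^p)/2) + ((x+y)^p - |x-y|^p)/2 := by
          rw [Finset.sum_sub_distrib, Finset.sum_const, Finset.card_univ, Fintype.card_fin,
            nsmul_eq_mul, ← Finset.mul_sum, horth j j' h]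
          ring
  have block_mix_add : ∀ (j j' : Fin k), j ≠ j' → ∀ x y : ℝ, 0 ≤ x → 0 ≤ y →
      ∑ i : Fin m, |x * hh j i + y * hh j' i| ^ p
        = (m:ℝ) * (((x+y)^p + |x-y|^p)/2) - ((x+y)^p - |x-y|^p)/2 := by
    intro j j' h x y hx hy
    calc ∑ i : Fin m, |x*hh j i + y*hh j' i|^p
        = ∑ i : Fin m, (((x+y)^p + |x-y|^p)/2 - ((x+y)^p - |x-y|^p)/2 * (hh j i * -hh j' i)) :=
          Finset.sum_congr rfl (fun i _ => by
            rw [show x*hh j i + y*hh j' i = x*hh j i - y*(-hh j' i) from by ring]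
            exact coordAbs p x y (hh j i) (-hh j' i) hx hy (hvals j i) (hvals_neg j' i))
      _ = (m:ℝ)*(((x+y)^p + |x-y|^p)/2) - ((x+y)^p - |x-y|^p)/2 := by
          rw [Finset.sum_sub_distrib, Finset.sum_const, Finset.card_univ, Fintype.card_fin,
            nsmul_eq_mul, ← Finset.mul_sum, horthn j j' h]
          ring
  -- ## the point family on the sum type
  set F : Fin k × Bool → (Fin m ⊕ (Fin 1 ⊕ Fin m)) → ℝ :=
    fun z => Sum.elim (fun t => (cond z.2 b a) * hh z.1 t)
      (Sum.elim (fun _ => cond z.2 (-u) u)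
        (fun t => cond z.2 (-(a * hh z.1 t)) (b * hh z.1 t))) with hFdef
  have hFnorm : ∀ z, ∑ s, |F z s| ^ p = 1 := by
    rintro ⟨j, s⟩
    simp only [hFdef]
    rw [Fintype.sum_sum_type, Fintype.sum_sum_type]
    simp only [Sum.elim_inl, Sum.elim_inr, Fin.sum_univ_one]
    cases s
    · simp only [Bool.cond_false]
      rw [block_norm j a ha0, block_norm j b hb0, abs_of_nonneg hu0]
      linear_combination hI
    · simp only [Bool.cond_true]
      rw [show (∑ t : Fin m, |-(a * hh j t)|^p) = ∑ t : Fin m, |a * hh j t|^p from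
          Finset.sum_congr rfl (fun t _ => by rw [abs_neg]), abs_neg,
        block_norm j a ha0, block_norm j b hb0, abs_of_nonneg hu0]
      linear_combination hI
  have dff : ∀ jj jj' : Fin k, jj ≠ jj' →
      ∑ s : Fin m ⊕ (Fin 1 ⊕ Fin m), |F (jj, false) s - F (jj', false) s| ^ p = 2 := by
    intro jj jj' hj
    simp only [hFdef]
    rw [Fintype.sum_sum_type, Fintype.sum_sum_type]
    simp only [Sum.elim_inl, Sum.elim_inr, Fin.sum_univ_one, Bool.cond_false]
    rw [block_mix_sub jj jj' hj a a ha0 ha0, block_mix_sub jj jj' hj b b hb0 hb0]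
    simp only [sub_self, abs_zero, Real.zero_rpow hp0]
    rw [show a + a = 2*a from by ring, show b + b = 2*b from by ring]
    linear_combination hII
  have dtt : ∀ jj jj' : Fin k, jj ≠ jj' →
      ∑ s : Fin m ⊕ (Fin 1 ⊕ Fin m), |F (jj, true) s - F (jj', true) s| ^ p = 2 := by
    intro jj jj' hj
    simp only [hFdef]
    rw [Fintype.sum_sum_type, Fintype.sum_sum_type]
    simp only [Sum.elim_inl, Sum.elim_inr, Fin.sum_univ_one, Bool.cond_true]
    rw [show (∑ t : Fin m, |-(a*hh jj t) - -(a*hh jj' t)|^p)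
        = ∑ t : Fin m, |a*hh jj' t - a*hh jj t|^p from
        Finset.sum_congr rfl (fun t _ => by
          rw [show -(a*hh jj t) - -(a*hh jj' t) = a*hh jj' t - a*hh jj t from by ring])]
    rw [block_mix_sub jj jj' hj b b hb0 hb0, block_mix_sub jj' jj (Ne.symm hj) a a ha0 ha0]
    simp only [sub_self, abs_zero, Real.zero_rpow hp0, neg_sub_neg]
    rw [show a + a = 2*a from by ring, show b + b = 2*b from by ring]
    linear_combination hII
  have dft : ∀ jj jj' : Fin k,
      ∑ s : Fin m ⊕ (Fin 1 ⊕ Fin m), |F (jj, false) s - F (jj', true) s| ^ p = 2 := by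
    intro jj jj'
    simp only [hFdef]
    rw [Fintype.sum_sum_type, Fintype.sum_sum_type]
    simp only [Sum.elim_inl, Sum.elim_inr, Fin.sum_univ_one, Bool.cond_false, Bool.cond_true]
    rw [show u - -u = 2*u from by ring, abs_of_nonneg (by positivity : (0:ℝ) ≤ 2*u)]
    rw [show (∑ t : Fin m, |b*hh jj t - -(a*hh jj' t)|^p)
        = ∑ t : Fin m, |b*hh jj t + a*hh jj' t|^p from
        Finset.sum_congr rfl (fun t _ => by rw [sub_neg_eq_add])]
    by_cases hj : jj = jj'
    · subst hj
      rw [block_same_sub jj a b, block_same_add jj b a,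
        abs_of_nonneg (sub_nonneg.mpr hba), abs_of_nonneg (add_nonneg hb0 ha0),
        add_comm b a]
      linear_combination hIII
    · rw [block_mix_sub jj jj' hj a b ha0 hb0, block_mix_add jj jj' hj b a hb0 ha0,
        abs_sub_comm b a, abs_of_nonneg (sub_nonneg.mpr hba), add_comm b a]
      linear_combination hIII
  have hFdist : ∀ z w, z ≠ w → ∑ s, |F z s - F w s| ^ p = 2 := by
    rintro ⟨j, s⟩ ⟨j', s'⟩ hzw
    cases s <;> cases s'
    · exact dff j j' (by rintro rfl; exact hzw rfl)
    · exact dft j j'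
    · calc ∑ s, |F (j,true) s - F (j',false) s|^p
          = ∑ s, |F (j',false) s - F (j,true) s|^p :=
            Finset.sum_congr rfl (fun s _ => by rw [abs_sub_comm])
        _ = 2 := dft j' j
    · exact dtt j j' (by rintro rfl; exact hzw rfl)
  -- ## transport to Fin (2k-1)
  have E : Fin (2*k-1) ≃ (Fin m ⊕ (Fin 1 ⊕ Fin m)) :=
    (finCongr hN.symm).trans (finSumFinEquiv.symm.trans
      (Equiv.sumCongr (Equiv.refl (Fin m)) finSumFinEquiv.symm))
  set F' : Fin k × Bool → (Fin (2*k-1) → ℝ) := fun z i => F z (E i) with hF'def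
  have htrans : ∀ z w : Fin k × Bool,
      ∑ i : Fin (2*k-1), |F' z i - F' w i| ^ p = ∑ s, |F z s - F w s| ^ p := by
    intro z w
    simp only [hF'def]
    exact Equiv.sum_comp E (fun s => |F z s - F w s| ^ p)
  have htransn : ∀ z, ∑ i : Fin (2*k-1), |F' z i| ^ p = ∑ s, |F z s| ^ p := by
    intro z
    simp only [hF'def]
    exact Equiv.sum_comp E (fun s => |F z s| ^ p)
  have hinj : Function.Injective F' := by
    intro z w hzw
    by_contra hne
    have h2 := hFdist z w hne
    have h0 : ∑ s, |F z s - F w s| ^ p = 0 := by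
      have heq : ∀ s, F z s = F w s := by
        intro s
        have h1 := congrFun hzw (E.symm s)
        simp only [hF'def, Equiv.apply_symm_apply] at h1
        exact h1
      calc ∑ s, |F z s - F w s|^p = ∑ _s : Fin m ⊕ (Fin 1 ⊕ Fin m), (0:ℝ) :=
            Finset.sum_congr rfl (fun s _ => by
              rw [heq s, sub_self, abs_zero, Real.zero_rpow hp0])
        _ = 0 := Finset.sum_const_zero
    rw [h0] at h2
    exact absurd h2 (by norm_num)
  refine ⟨Finset.image F' Finset.univ, ?_, ?_, ?_⟩
  · rw [Finset.card_image_of_injective _ hinj, Finset.card_univ, Fintype.card_prod,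
      Fintype.card_fin, Fintype.card_bool]
    omega
  · intro x hx
    obtain ⟨z, _, rfl⟩ := Finset.mem_image.mp hx
    rw [htransn z, hFnorm z, Real.one_rpow]
  · intro x hx y hy hxy
    obtain ⟨z, _, rfl⟩ := Finset.mem_image.mp hx
    obtain ⟨w, _, rfl⟩ := Finset.mem_image.mp hy
    have hzw : z ≠ w := by rintro rfl; exact hxy rfl
    rw [htrans z w, hFdist z w hzw]
end

section
/- Let p be an even positive integer and d ≥ 1, and let S ⊂ ℝ^d be a 1-equilateral set in ℓ_p^d. Then the family of polynomials {P_a : a ∈ S}, where P_a(x) = −1 + ∑_{i=1}^d (x_i − a_i)^p is a polynomial in the variables x_1, …, x_d, is linearly independent over ℝ; consequently |S| ≤ (p − 1)·d + 2. -/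
open MvPolynomial Module Submodule

/-!
As `p` is even, distinct `a, b ∈ S` satisfy `∑ i, (a i - b i) ^ p = 1`, so `P_b(a)` is `-1` if
`a = b` and `0` otherwise; evaluating a vanishing linear combination of the `P_b` at `a` thus kills
its `a`-th coefficient. Expanding `(X i - a i) ^ p` binomially, every `P_a` is a linear combination
of `1`, `∑ i, X i ^ p` and the monomials `X i ^ k` with `1 ≤ k < p`, so `|S|` is at most the
number `(p - 1) d + 2` of these polynomials.
-/

theorem rpow_sum_abs_pow_inv_eq_one_iff {ι : Type*} [Fintype ι] {p : ℕ} (hp : Even p)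
    (hp0 : p ≠ 0) (x : ι → ℝ) :
    (∑ i, |x i| ^ (p : ℝ)) ^ (1 / (p : ℝ)) = 1 ↔ ∑ i, x i ^ p = 1 := by
  simp only [Real.rpow_natCast, hp.pow_abs]
  rw [one_div, Real.rpow_inv_eq (Finset.sum_nonneg fun i _ => hp.pow_nonneg _) zero_le_one
    (by exact_mod_cast hp0), Real.one_rpow]

section Polynomials

variable {K σ : Type*} [Field K] [Fintype σ]

noncomputable def equilateralPoly (p : ℕ) (a : σ → K) : MvPolynomial σ K :=
  C (-1) + ∑ i, (X i - C (a i)) ^ p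

theorem eval_equilateralPoly (p : ℕ) (a b : σ → K) :
    eval b (equilateralPoly p a) = -1 + ∑ i, (b i - a i) ^ p := by
  simp [equilateralPoly]

theorem linearIndependent_equilateralPoly {p : ℕ} (hp : p ≠ 0) {S : Finset (σ → K)}
    (hS : ∀ a ∈ S, ∀ b ∈ S, a ≠ b → ∑ i, (a i - b i) ^ p = 1) :
    LinearIndependent K fun a : S => equilateralPoly p a.1 := by
  rw [Fintype.linearIndependent_iff]
  intro g hg a
  have h := congrArg (eval a.1) hg
  simp only [map_sum, smul_eval, eval_equilateralPoly, map_zero] at h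
  rw [Finset.sum_eq_single a (fun b _ hba => ?_) (by simp)] at h
  · simpa [zero_pow hp] using h
  · rw [hS a a.2 b b.2 (Subtype.coe_ne_coe.mpr hba.symm)]
    ring

variable (K σ) in
noncomputable def equilateralPolySpan (p : ℕ) : Submodule K (MvPolynomial σ K) :=
  span K (Set.range (Sum.elim ![1, ∑ i, X i ^ p]
    fun ik : σ × Fin (p - 1) => X ik.1 ^ (ik.2.val + 1)))

instance (p : ℕ) : FiniteDimensional K (equilateralPolySpan K σ p) :=
  FiniteDimensional.span_of_finite K (Set.finite_range _)

theorem finrank_equilateralPolySpan_le (p : ℕ) :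
    finrank K (equilateralPolySpan K σ p) ≤ (p - 1) * Fintype.card σ + 2 := by
  refine (finrank_range_le_card _).trans ?_
  simp only [Fintype.card_sum, Fintype.card_fin, Fintype.card_prod]
  exact le_of_eq (by ring)

theorem X_sub_C_pow_sub_mem_equilateralPolySpan {p : ℕ} (hp : p ≠ 0) (i : σ) (c : K) :
    (X i - C c) ^ p - X i ^ p - C ((-c) ^ p) ∈ equilateralPolySpan K σ p := by
  obtain ⟨n, rfl⟩ := Nat.exists_eq_succ_of_ne_zero hp
  rw [sub_eq_add_neg (X i), ← C_neg, add_pow, Finset.sum_range_succ, Finset.sum_range_succ']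
  simp only [Nat.succ_eq_add_one, Nat.reduceSubDiff, pow_zero, tsub_zero, one_mul,
    Nat.choose_zero_right, Nat.cast_one, mul_one, tsub_self, Nat.choose_self, C_neg, C_pow,
    add_sub_cancel_right]
  refine sum_mem fun k hk => ?_
  have hterm : X i ^ (k + 1) * (-C c) ^ (n - k) * ((n + 1).choose (k + 1) : MvPolynomial σ K) =
      ((-c) ^ (n - k) * (n + 1).choose (k + 1)) • X i ^ (k + 1) := by
    rw [smul_eq_C_mul, C_mul, C_pow, C_neg, map_natCast]
    ring
  rw [hterm]
  exact smul_mem _ _ (subset_span ⟨Sum.inr (i, ⟨k, by simpa using hk⟩), rfl⟩)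

theorem equilateralPoly_mem_equilateralPolySpan {p : ℕ} (hp : p ≠ 0) (a : σ → K) :
    equilateralPoly p a ∈ equilateralPolySpan K σ p := by
  have hdecomp : equilateralPoly p a =
      ∑ i, ((X i - C (a i)) ^ p - X i ^ p - C ((-a i) ^ p)) + ∑ i, X i ^ p +
        (-1 + ∑ i, (-a i) ^ p) • 1 := by
    simp only [equilateralPoly, Finset.sum_sub_distrib, smul_eq_C_mul, mul_one, map_add, map_sum]
    ring
  rw [hdecomp]
  refine add_mem (add_mem (sum_mem fun i _ => ?_) ?_) (smul_mem _ _ ?_)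
  · exact X_sub_C_pow_sub_mem_equilateralPolySpan hp i (a i)
  · exact subset_span ⟨Sum.inl 1, rfl⟩
  · exact subset_span ⟨Sum.inl 0, rfl⟩

theorem card_le_of_sum_sub_pow_eq_one {p : ℕ} (hp : p ≠ 0) {S : Finset (σ → K)}
    (hS : ∀ a ∈ S, ∀ b ∈ S, a ≠ b → ∑ i, (a i - b i) ^ p = 1) :
    S.card ≤ (p - 1) * Fintype.card σ + 2 :=
  calc S.card = finrank K (span K (Set.range fun a : S => equilateralPoly p a.1)) := by
        rw [finrank_span_eq_card (linearIndependent_equilateralPoly hp hS), Fintype.card_coe]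
    _ ≤ finrank K (equilateralPolySpan K σ p) :=
        finrank_mono <| span_le.mpr <| Set.range_subset_iff.mpr fun a =>
          equilateralPoly_mem_equilateralPolySpan hp a.1
    _ ≤ (p - 1) * Fintype.card σ + 2 := finrank_equilateralPolySpan_le p

end Polynomials

theorem equilateral_polynomials_linearIndependent_general (p d : ℕ) (hp : Even p) (hp0 : 0 < p)
    (S : Finset (Fin d → ℝ))
    (hS : ∀ x ∈ S, ∀ y ∈ S, x ≠ y → (∑ i, |x i - y i| ^ (p : ℝ)) ^ (1 / (p : ℝ)) = 1) :
    LinearIndependent ℝ (fun a : S =>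
      (MvPolynomial.C (-1) + ∑ i, (MvPolynomial.X i - MvPolynomial.C (a.1 i)) ^ p :
        MvPolynomial (Fin d) ℝ)) ∧
    S.card ≤ (p - 1) * d + 2 := by
  have hS' : ∀ a ∈ S, ∀ b ∈ S, a ≠ b → ∑ i, (a i - b i) ^ p = 1 := fun a ha b hb hab =>
    (rpow_sum_abs_pow_inv_eq_one_iff hp hp0.ne' _).mp (hS a ha b hb hab)
  refine ⟨linearIndependent_equilateralPoly hp0.ne' hS', ?_⟩
  simpa using card_le_of_sum_sub_pow_eq_one hp0.ne' hS'

/-- If `p` is an even positive integer and `S ⊂ ℝ^d` is `1`-equilateral in `ℓ_p^d`,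
then the polynomials `P_a(x) = -1 + ∑ i, (x_i - a_i)^p` for `a ∈ S` are linearly
independent over `ℝ`, and consequently `|S| ≤ (p - 1) d + 2`. -/
theorem equilateral_polynomials_linearIndependent (p d : ℕ) (hp : Even p) (hp0 : 0 < p)
    (hd : 1 ≤ d) (S : Finset (Fin d → ℝ))
    (hS : ∀ x ∈ S, ∀ y ∈ S, x ≠ y → (∑ i, |x i - y i| ^ (p : ℝ)) ^ (1 / (p : ℝ)) = 1) :
    LinearIndependent ℝ (fun a : S =>
      (MvPolynomial.C (-1) + ∑ i, (MvPolynomial.X i - MvPolynomial.C (a.1 i)) ^ p :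
        MvPolynomial (Fin d) ℝ)) ∧
    S.card ≤ (p - 1) * d + 2 :=
  equilateral_polynomials_linearIndependent_general p d hp hp0 S hS
end

section
/- Let p be a positive integer with p ≡ 0 (mod 4), let d ≥ 1, and let S ⊂ ℝ^d be a 1-equilateral set in ℓ_p^d. Define P_a(x) = −1 + ∑_{i=1}^d (x_i − a_i)^p for each a ∈ S. Then the set of polynomials {P_a : a ∈ S} ∪ {1} ∪ {x_i^m : 1 ≤ i ≤ d, 1 ≤ m ≤ p/2} is linearly independent over ℝ in the space of real polynomials in x_1, …, x_d. -/
/-!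
Suppose `Q = ∑ c_a P_a` lies in the span `W` of `1` and the `x_i^m`, `1 ≤ m ≤ p/2`; since these
are distinct monomials it suffices to show `c = 0`. Equilaterality gives `Q(b) = -c_b` for
`b ∈ S`. As `Q ∈ W` has no `x_i^k` term for `k > p/2`, comparing coefficients of `x_i^(p-n)`
shows that the weights `c` have vanishing moments `∑_a c_a a_i^n` for `n < p/2`, so for every
`q ∈ W` the pairing `∑_b c_b q(b)` only sees the `x_i^(p/2)` coefficients of `q`. Applied to
`q = Q`, whose `x_i^(p/2)` coefficient is `C(p, p/2) ∑_a c_a a_i^(p/2)` because `p/2` is even,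
this reads `-∑_b c_b² = C(p, p/2) ∑_i (∑_a c_a a_i^(p/2))² ≥ 0`, whence `c = 0`.
-/

open MvPolynomial

open Submodule Set in
theorem linearIndependent_sumElim_of_sum_smul_mem_span {R M ι κ : Type*} [Ring R]
    [AddCommGroup M] [Module R M] [Fintype ι] {v : ι → M} {w : κ → M}
    (hw : LinearIndependent R w)
    (hv : ∀ c : ι → R, ∑ j, c j • v j ∈ span R (range w) → c = 0) :
    LinearIndependent R (Sum.elim v w) := by
  refine .sum_type (Fintype.linearIndependent_iff.2 fun c hc ↦ ?_) hw ?_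
  · exact congrFun (hv c (hc ▸ zero_mem _))
  · refine disjoint_def.2 fun x hx hxw ↦ ?_
    obtain ⟨c, rfl⟩ := (mem_span_range_iff_exists_fun R).1 hx
    simp [hv c hxw]

theorem sum_pow_eq_one_of_rpow_eq_one {σ : Type*} [Fintype σ] {p : ℕ} (hp : Even p)
    (hp0 : p ≠ 0) {v : σ → ℝ} (h : (∑ i, |v i| ^ (p : ℝ)) ^ (1 / (p : ℝ)) = 1) :
    ∑ i, v i ^ p = 1 := by
  simp only [Real.rpow_natCast, hp.pow_abs, one_div] at h
  rw [← Real.rpow_inv_natCast_pow (Finset.sum_nonneg fun i _ ↦ hp.pow_nonneg (v i)) hp0, h,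
    one_pow]

namespace MvPolynomial

open Submodule Set

variable {σ R : Type*} [CommRing R]

noncomputable def unitSpherePoly [Fintype σ] (p : ℕ) (a : σ → R) : MvPolynomial σ R :=
  C (-1) + ∑ i, (X i - C (a i)) ^ p

noncomputable def lowAxisMonomial (N : ℕ) : Unit ⊕ σ × Fin N → MvPolynomial σ R :=
  Sum.elim (fun _ ↦ 1) fun im ↦ X im.1 ^ (im.2.1 + 1)

/-- `restrictToAxis i q` is `t ↦ q(t • eᵢ)`: for `k ≠ 0` its `k`-th coefficient is the coefficient
of `x_i^k` in `q`. -/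
noncomputable def restrictToAxis [DecidableEq σ] (i : σ) : MvPolynomial σ R →ₐ[R] Polynomial R :=
  aeval (Pi.single i Polynomial.X)

theorem linearIndependent_lowAxisMonomial [Nontrivial R] (N : ℕ) :
    LinearIndependent R (lowAxisMonomial (σ := σ) (R := R) N) := by
  let exponent : Unit ⊕ σ × Fin N → σ →₀ ℕ :=
    Sum.elim (fun _ ↦ 0) fun im ↦ Finsupp.single im.1 (im.2.1 + 1)
  have hexp : Function.Injective exponent := by
    rintro (_ | ⟨i, m⟩) (_ | ⟨j, n⟩) h <;>
      simp only [exponent, Sum.elim_inl, Sum.elim_inr, Finsupp.single_eq_single_iff,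
        Finsupp.single_eq_zero, eq_comm (a := (0 : σ →₀ ℕ))] at h <;>
      simp_all [Fin.ext_iff]
  have hmono : lowAxisMonomial N = fun t ↦ monomial (exponent t) (1 : R) := by
    funext t
    rcases t with (_ | ⟨i, m⟩) <;> simp [lowAxisMonomial, exponent, X_pow_eq_monomial]
  rw [hmono]
  exact (basisMonomials σ R).linearIndependent.comp exponent hexp

section

variable [DecidableEq σ] (i : σ)

theorem restrictToAxis_X (j : σ) :
    restrictToAxis i (X j : MvPolynomial σ R) = if j = i then Polynomial.X else 0 := by
  simp [restrictToAxis, Pi.single_apply]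

theorem restrictToAxis_C (r : R) :
    restrictToAxis i (C r : MvPolynomial σ R) = Polynomial.C r := by
  simp [restrictToAxis, Polynomial.algebraMap_eq]

end

section

variable [DecidableEq σ] {N : ℕ} {q : MvPolynomial σ R}

theorem coeff_restrictToAxis_eq_zero_of_mem_span
    (hq : q ∈ span R (range (lowAxisMonomial N))) (i : σ) {k : ℕ} (hk : N < k) :
    (restrictToAxis i q).coeff k = 0 := by
  induction hq using span_induction with
  | mem _ hx =>
    obtain ⟨_ | ⟨j, m⟩, rfl⟩ := hx
    · simp [lowAxisMonomial, Polynomial.coeff_one]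
      omega
    · by_cases hji : j = i <;>
        simp [lowAxisMonomial, restrictToAxis_X, hji, Polynomial.coeff_X_pow]
      omega
  | zero => simp
  | add _ _ _ _ hx hy => simp [hx, hy]
  | smul _ _ _ hx => simp [hx]

theorem sum_mul_eval_eq_of_mem_span [Fintype σ] {ι : Type*} [Fintype ι] (c : ι → R)
    (a : ι → σ → R) (h0 : ∑ j, c j = 0)
    (hmom : ∀ i, ∀ n, 0 < n → n < N → ∑ j, c j * a j i ^ n = 0)
    (hq : q ∈ span R (range (lowAxisMonomial N))) :
    ∑ j, c j * eval (a j) q = ∑ i, (restrictToAxis i q).coeff N * ∑ j, c j * a j i ^ N := by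
  induction hq using span_induction with
  | mem _ hx =>
    obtain ⟨_ | ⟨i, m⟩, rfl⟩ := hx
    · simp only [lowAxisMonomial, Sum.elim_inl, map_one, Polynomial.coeff_one, mul_one, h0]
      split_ifs with hN <;> simp [hN, h0]
    · simp only [lowAxisMonomial, Sum.elim_inr, map_pow, restrictToAxis_X, eval_X]
      rw [Finset.sum_eq_single i (fun j _ hji ↦ by simp [Ne.symm hji]) (by simp), if_pos rfl,
        Polynomial.coeff_X_pow]
      split_ifs with hN
      · rw [← hN, one_mul]
      · rw [zero_mul]
        exact hmom i (m.1 + 1) m.1.succ_pos (by omega)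
  | zero => simp
  | add _ _ _ _ hx hy => simp [mul_add, Finset.sum_add_distrib, add_mul, hx, hy]
  | smul r _ _ hx => simp [mul_left_comm _ r, ← Finset.mul_sum, hx, mul_assoc]

end

section

variable [Fintype σ] {p : ℕ}

theorem eval_unitSpherePoly (x a : σ → R) :
    eval x (unitSpherePoly p a) = -1 + ∑ i, (x i - a i) ^ p := by
  simp [unitSpherePoly]

theorem eval_sum_smul_unitSpherePoly {ι : Type*} [Fintype ι] (hp : p ≠ 0) {a : ι → σ → R}
    (ha : ∀ j k, j ≠ k → ∑ i, (a j i - a k i) ^ p = 1) (c : ι → R) (k : ι) :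
    eval (a k) (∑ j, c j • unitSpherePoly p (a j)) = -c k := by
  rw [map_sum, Finset.sum_eq_single k]
  · simp [eval_unitSpherePoly, zero_pow hp]
  · intro j _ hjk
    simp [eval_unitSpherePoly, ha k j (Ne.symm hjk)]
  · simp

variable [DecidableEq σ]

theorem restrictToAxis_unitSpherePoly (i : σ) (a : σ → R) :
    restrictToAxis i (unitSpherePoly p a) =
      (Polynomial.X + Polynomial.C (-a i)) ^ p +
        Polynomial.C (-1 + ∑ j ∈ Finset.univ.erase i, (-a j) ^ p) := by
  have hoff : ∀ j ∈ Finset.univ.erase i,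
      restrictToAxis i ((X j - C (a j)) ^ p) = Polynomial.C ((-a j) ^ p) := fun j hj ↦ by
    simp [restrictToAxis_X, Finset.ne_of_mem_erase hj]
  rw [unitSpherePoly, map_add, map_sum, ← Finset.add_sum_erase _ _ (Finset.mem_univ i),
    Finset.sum_congr rfl hoff]
  simp only [map_pow, map_sub, restrictToAxis_X, if_pos, restrictToAxis_C, map_add, map_sum,
    Polynomial.C_neg]
  ring

theorem coeff_restrictToAxis_unitSpherePoly {k : ℕ} (hk : k ≠ 0) (i : σ) (a : σ → R) :
    (restrictToAxis i (unitSpherePoly p a)).coeff k = (-a i) ^ (p - k) * p.choose k := by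
  rw [restrictToAxis_unitSpherePoly, Polynomial.coeff_add, Polynomial.coeff_C, if_neg hk,
    add_zero, Polynomial.coeff_X_add_C_pow]

theorem coeff_restrictToAxis_sum_smul_unitSpherePoly {ι : Type*} [Fintype ι] {k : ℕ} (hk : k ≠ 0)
    (a : ι → σ → R) (c : ι → R) (i : σ) :
    (restrictToAxis i (∑ j, c j • unitSpherePoly p (a j))).coeff k =
      p.choose k * ∑ j, c j * (-a j i) ^ (p - k) := by
  simp only [map_sum, map_smul, Polynomial.finsetSum_coeff, Polynomial.coeff_smul, smul_eq_mul,
    coeff_restrictToAxis_unitSpherePoly hk, Finset.mul_sum]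
  exact Finset.sum_congr rfl fun j _ ↦ by ring

theorem eq_zero_of_sum_smul_unitSpherePoly_mem_span [Nonempty σ] {ι : Type*} [Fintype ι]
    (hp : 4 ∣ p) (hp0 : p ≠ 0) {a : ι → σ → ℝ}
    (ha : ∀ j k, j ≠ k → ∑ i, (a j i - a k i) ^ p = 1) {c : ι → ℝ}
    (hc : ∑ j, c j • unitSpherePoly p (a j) ∈ span ℝ (range (lowAxisMonomial (p / 2)))) :
    c = 0 := by
  have hcoeff {k : ℕ} (hk : k ≠ 0) :=
    coeff_restrictToAxis_sum_smul_unitSpherePoly (p := p) hk a c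
  have hmom : ∀ i, ∀ n < p / 2, ∑ j, c j * a j i ^ n = 0 := by
    intro i n hn
    have h := coeff_restrictToAxis_eq_zero_of_mem_span hc i (k := p - n) (by omega)
    rw [hcoeff (by omega), Nat.sub_sub_self (by omega)] at h
    have hchoose : (p.choose (p - n) : ℝ) ≠ 0 := by
      exact_mod_cast (Nat.choose_pos (by omega)).ne'
    have hsign : ∑ j, c j * (-a j i) ^ n = (-1) ^ n * ∑ j, c j * a j i ^ n := by
      rw [Finset.mul_sum]
      exact Finset.sum_congr rfl fun j _ ↦ by ring
    rw [hsign] at h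
    simpa [hchoose] using h
  obtain ⟨i₀⟩ := ‹Nonempty σ›
  have h0 : ∑ j, c j = 0 := by simpa using hmom i₀ 0 (by omega)
  have hmid : ∀ i, (restrictToAxis i (∑ j, c j • unitSpherePoly p (a j))).coeff (p / 2) =
      p.choose (p / 2) * ∑ j, c j * a j i ^ (p / 2) := by
    intro i
    have heven : Even (p / 2) := by rw [Nat.even_iff]; omega
    rw [hcoeff (by omega) i, show p - p / 2 = p / 2 by omega]
    simp [heven.neg_pow]
  have hpairing := sum_mul_eval_eq_of_mem_span c a h0 (fun i n _ hn ↦ hmom i n hn) hc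
  simp only [eval_sum_smul_unitSpherePoly hp0 ha, hmid] at hpairing
  have hsq : ∑ j, c j * c j = 0 := by
    have hrhs : 0 ≤ ∑ i, (p.choose (p / 2) * ∑ j, c j * a j i ^ (p / 2)) *
        ∑ j, c j * a j i ^ (p / 2) :=
      Finset.sum_nonneg fun i _ ↦ by
        rw [mul_assoc]; exact mul_nonneg (Nat.cast_nonneg _) (mul_self_nonneg _)
    simp only [mul_neg, Finset.sum_neg_distrib] at hpairing
    linarith [Finset.sum_nonneg fun j (_ : j ∈ Finset.univ) ↦ mul_self_nonneg (c j)]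
  funext j
  exact (Finset.sum_mul_self_eq_zero_iff _ _).1 hsq j (Finset.mem_univ j)

end

end MvPolynomial

/-- For `p ≡ 0 (mod 4)` and a `1`-equilateral set `S` in `ℓ_p^d`, the family of
polynomials consisting of `P_a(x) = -1 + ∑ i, (x_i - a_i)^p` for `a ∈ S`, the
constant polynomial `1`, and the monomials `x_i^m` for `1 ≤ i ≤ d`,
`1 ≤ m ≤ p/2`, is linearly independent over `ℝ`. -/
theorem equilateral_extended_family_linearIndependent (p d : ℕ) (hp : p % 4 = 0)
    (hp0 : 0 < p) (hd : 1 ≤ d) (S : Finset (Fin d → ℝ))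
    (hS : ∀ x ∈ S, ∀ y ∈ S, x ≠ y → (∑ i, |x i - y i| ^ (p : ℝ)) ^ (1 / (p : ℝ)) = 1) :
    LinearIndependent ℝ (fun t : (S ⊕ (Unit ⊕ Fin d × Fin (p / 2))) =>
      match t with
      | Sum.inl a =>
          (MvPolynomial.C (-1) + ∑ i, (MvPolynomial.X i - MvPolynomial.C (a.1 i)) ^ p :
            MvPolynomial (Fin d) ℝ)
      | Sum.inr (Sum.inl _) => (1 : MvPolynomial (Fin d) ℝ)
      | Sum.inr (Sum.inr (i, m)) => (MvPolynomial.X i : MvPolynomial (Fin d) ℝ) ^ (m.1 + 1)) := by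
  have hunit : ∀ x y : S, x ≠ y → ∑ i, (x.1 i - y.1 i) ^ p = 1 := fun x y hxy ↦
    sum_pow_eq_one_of_rpow_eq_one (Nat.even_iff.2 (by omega)) hp0.ne'
      (hS x x.2 y y.2 (Subtype.coe_ne_coe.2 hxy))
  have : Nonempty (Fin d) := ⟨⟨0, hd⟩⟩
  have h : LinearIndependent ℝ
      (Sum.elim (fun a : S ↦ unitSpherePoly p a.1) (lowAxisMonomial (p / 2))) :=
    linearIndependent_sumElim_of_sum_smul_mem_span (linearIndependent_lowAxisMonomial _)
    fun c hc ↦ eq_zero_of_sum_smul_unitSpherePoly_mem_span (Nat.dvd_of_mod_eq_zero hp) hp0.ne'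
      hunit hc
  convert h using 2 with t
  rcases t with _ | _ | _ <;> rfl
end

section
/- For every p with 1 < p < ∞ and every d ≥ 1, there exists an equilateral set in ℓ_p^d of cardinality d + 1; in particular, the d standard basis vectors of ℝ^d together with a suitable scalar multiple of (1, 1, …, 1) form such a set. -/
open Real

/-- For every `1 < p < ∞` and `d ≥ 1` the space `ℓ_p^d` contains an equilateral
set of `d + 1` points, namely the standard basis vectors together with a suitable
scalar multiple of `(1, 1, …, 1)`. -/
theorem equilateral_dim_add_one (p : ℝ) (hp : 1 < p) (d : ℕ) (hd : 1 ≤ d) :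
    ∃ t : ℝ,
      (Finset.univ.image (fun i : Fin d => (fun j => if i = j then (1 : ℝ) else 0))
          ∪ {fun _ => t}).card = d + 1 ∧
      ∃ lam : ℝ, 0 < lam ∧
        IsEquilateralLp p lam
          (Finset.univ.image (fun i : Fin d => (fun j => if i = j then (1 : ℝ) else 0))
            ∪ {fun _ => t}) := by
  have hp0 : (0:ℝ) < p := by linarith
  set g : ℝ → ℝ := fun t => (1 - t) ^ p + ((d:ℝ) - 1) * (-t) ^ p with hg
  have hcpow : Continuous fun x : ℝ => x ^ p := by
    rw [continuous_iff_continuousAt]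
    intro x
    exact Real.continuousAt_rpow_const x p (Or.inr hp0.le)
  have hgc : ContinuousOn g (Set.Icc (-1:ℝ) 0) := by
    apply Continuous.continuousOn
    exact (hcpow.comp (continuous_const.sub continuous_id)).add
      (continuous_const.mul (hcpow.comp continuous_neg))
  have hg0 : g 0 = 1 := by
    simp [hg, Real.one_rpow, Real.zero_rpow (ne_of_gt hp0)]
  have hg1 : 2 ≤ g (-1) := by
    have h2p : (2:ℝ) < 2 ^ p := by
      calc (2:ℝ) = 2 ^ (1:ℝ) := by rw [Real.rpow_one]
      _ < 2 ^ p := Real.rpow_lt_rpow_left_iff (by norm_num) |>.mpr hp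
    have hd1 : (0:ℝ) ≤ (d:ℝ) - 1 := by
      have : (1:ℝ) ≤ d := by exact_mod_cast hd
      linarith
    have h1p : ((1:ℝ)) ^ p = 1 := Real.one_rpow p
    simp only [hg]
    have : (1 - (-1:ℝ)) = 2 := by norm_num
    rw [this]
    have : (-(-1:ℝ)) = 1 := by norm_num
    rw [this, h1p]
    nlinarith
  obtain ⟨t, htmem, htg⟩ : ∃ t ∈ Set.Icc (-1:ℝ) 0, g t = 2 := by
    have := intermediate_value_Icc' (by norm_num : (-1:ℝ) ≤ 0) hgc
    have h2 : (2:ℝ) ∈ Set.Icc (g 0) (g (-1)) := by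
      rw [hg0]; exact ⟨by norm_num, hg1⟩
    obtain ⟨t, ht, hgt⟩ := this h2
    exact ⟨t, ht, hgt⟩
  have htne : t ≠ 0 := by
    intro h; rw [h, hg0] at htg; norm_num at htg
  have htneg : t < 0 := lt_of_le_of_ne htmem.2 htne
  set b : Fin d → (Fin d → ℝ) := fun i => fun j => if i = j then (1:ℝ) else 0 with hb
  have hbinj : Function.Injective b := by
    intro i j hij
    by_contra h
    have := congrFun hij i
    simp [hb, (Ne.symm h : j ≠ i)] at this
  have hconst : (fun _ : Fin d => t) ∉ Finset.univ.image b := by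
    intro h
    obtain ⟨i, _, hi⟩ := Finset.mem_image.mp h
    have := congrFun hi i
    simp [hb] at this
    rw [← this] at htneg
    norm_num at htneg
  refine ⟨t, ?_, ?_⟩
  · rw [Finset.card_union_of_disjoint (by simpa using hconst)]
    simp [Finset.card_image_of_injective _ hbinj]
  · refine ⟨2 ^ (1/p), Real.rpow_pos_of_pos (by norm_num) _, ?_⟩
    -- distances
    have keyA : ∀ i j : Fin d, i ≠ j → ∑ k, |b i k - b j k| ^ p = 2 := by
      intro i j hij
      have hzero : ∀ k ∈ Finset.univ, k ∉ ({i, j} : Finset (Fin d)) →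
          |b i k - b j k| ^ p = 0 := by
        intro k _ hk
        simp only [Finset.mem_insert, Finset.mem_singleton, not_or] at hk
        have h1 : b i k = 0 := by simp [hb, Ne.symm hk.1]
        have h2 : b j k = 0 := by simp [hb, Ne.symm hk.2]
        rw [h1, h2]
        simp [Real.zero_rpow (ne_of_gt hp0)]
      rw [← Finset.sum_subset (Finset.subset_univ ({i, j} : Finset (Fin d))) hzero]
      rw [Finset.sum_pair hij]
      have h1 : b i i = 1 := by simp [hb]
      have h2 : b j i = 0 := by simp [hb, Ne.symm hij]
      have h3 : b i j = 0 := by simp [hb, hij]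
      have h4 : b j j = 1 := by simp [hb]
      rw [h1, h2, h3, h4]
      norm_num [Real.one_rpow]
    have keyB : ∀ i : Fin d, ∑ k, |b i k - t| ^ p = 2 := by
      intro i
      rw [← Finset.add_sum_erase Finset.univ _ (Finset.mem_univ i)]
      have h1 : |b i i - t| ^ p = (1 - t) ^ p := by
        have : b i i = 1 := by simp [hb]
        rw [this, abs_of_pos (by linarith)]
      have h2 : ∀ k ∈ Finset.univ.erase i, |b i k - t| ^ p = (-t) ^ p := by
        intro k hk
        have hki : i ≠ k := fun h => (Finset.mem_erase.mp hk).1 h.symm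
        have : b i k = 0 := by simp [hb, hki]
        rw [this]
        have : |0 - t| = -t := by rw [zero_sub, abs_neg, abs_of_neg htneg]
        rw [this]
      rw [h1, Finset.sum_congr rfl h2, Finset.sum_const]
      rw [Finset.card_erase_of_mem (Finset.mem_univ i)]
      simp only [Finset.card_univ, Fintype.card_fin, nsmul_eq_mul]
      rw [Nat.cast_sub hd]
      simpa [hg] using htg
    intro x hx y hy hxy
    have hsum : ∑ k, |x k - y k| ^ p = 2 := by
      rw [Finset.mem_union] at hx hy
      rcases hx with hx | hx <;> rcases hy with hy | hy
      · obtain ⟨i, _, hi⟩ := Finset.mem_image.mp hx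
        obtain ⟨j, _, hj⟩ := Finset.mem_image.mp hy
        subst hi; subst hj
        exact keyA i j (fun h => hxy (by rw [h]))
      · obtain ⟨i, _, hi⟩ := Finset.mem_image.mp hx
        rw [Finset.mem_singleton] at hy
        subst hi; subst hy
        exact keyB i
      · obtain ⟨j, _, hj⟩ := Finset.mem_image.mp hy
        rw [Finset.mem_singleton] at hx
        subst hj; subst hx
        have := keyB j
        rw [← this]
        exact Finset.sum_congr rfl fun k _ => by rw [abs_sub_comm]
      · rw [Finset.mem_singleton] at hx hy
        exact absurd (hx.trans hy.symm) hxy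
    rw [hsum]
end

section
/- For every p with 1 < p < ∞, there does not exist a set of 3 vectors on the unit circle of ℓ_p^2 whose pairwise ℓ_p-distances are all equal to 2^{1/p}. -/
/-!
For `x, y ∈ ℝ²` with `‖x‖_p^p = ‖y‖_p^p = 1` and `‖x - y‖_p^p = 2`, compare coordinatewise:
for `p > 1` the defect `|a|^p + |b|^p - |a - b|^p` has the sign of `a * b`. The two coordinate
defects add up to `0`, so `sign (x₀ y₀) + sign (x₁ y₁) = 0`; that is, the sign patterns of `x`
and `y`, viewed as nonzero vectors of `ℝ²`, are orthogonal. Three points at mutual distance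
`2^(1/p)` would give three pairwise orthogonal nonzero vectors in the plane.
-/

open Real

section RpowDefect

variable {p : ℝ}

lemma add_rpow_lt_rpow_add (hp : 1 < p) {a b : ℝ} (ha : 0 < a) (hb : 0 < b) :
    a ^ p + b ^ p < (a + b) ^ p := by
  have hp1 : 0 < p - 1 := sub_pos.2 hp
  have hpow : ∀ c : ℝ, 0 < c → c ^ p = c * c ^ (p - 1) := fun c hc => by
    rw [← rpow_one_add' hc.le (by linarith)]; ring_nf
  have hlt : ∀ c : ℝ, 0 < c → c < a + b → c ^ (p - 1) < (a + b) ^ (p - 1) :=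
    fun c hc hcs => rpow_lt_rpow hc.le hcs hp1
  calc a ^ p + b ^ p = a * a ^ (p - 1) + b * b ^ (p - 1) := by rw [hpow a ha, hpow b hb]
    _ < a * (a + b) ^ (p - 1) + b * (a + b) ^ (p - 1) :=
      add_lt_add (mul_lt_mul_of_pos_left (hlt a ha (by linarith)) ha)
        (mul_lt_mul_of_pos_left (hlt b hb (by linarith)) hb)
    _ = (a + b) ^ p := by rw [hpow _ (by linarith)]; ring

lemma abs_sub_rpow_lt_rpow_add_rpow (hp : 1 < p) {a b : ℝ} (ha : 0 < a) (hb : 0 < b) :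
    |a - b| ^ p < a ^ p + b ^ p := by
  have hmax : |a - b| < max a b := abs_sub_lt_iff.2 ⟨by simp [hb], by simp [ha]⟩
  calc |a - b| ^ p < max a b ^ p := rpow_lt_rpow (abs_nonneg _) hmax (by linarith)
    _ ≤ a ^ p + b ^ p := by
      rcases max_choice a b with h | h <;> rw [h]
      · linarith [rpow_pos_of_pos hb p]
      · linarith [rpow_pos_of_pos ha p]

lemma sign_rpow_defect_of_pos (hp : 1 < p) {a : ℝ} (ha : 0 < a) (b : ℝ) :
    SignType.sign (|a| ^ p + |b| ^ p - |a - b| ^ p) = SignType.sign (a * b) := by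
  rw [abs_of_pos ha]
  rcases lt_trichotomy b 0 with hb | rfl | hb
  · have hab : |a - b| = a + |b| := by rw [abs_of_neg hb, abs_of_pos (by linarith)]; ring
    rw [hab, sign_neg (mul_neg_of_pos_of_neg ha hb), sign_neg (sub_neg.2 _)]
    exact add_rpow_lt_rpow_add hp ha (abs_pos.2 hb.ne)
  · simp [abs_of_pos ha, zero_rpow (by linarith : p ≠ 0)]
  · rw [abs_of_pos hb, sign_pos (mul_pos ha hb), sign_pos (sub_pos.2 _)]
    exact abs_sub_rpow_lt_rpow_add_rpow hp ha hb

lemma sign_rpow_defect (hp : 1 < p) (a b : ℝ) :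
    SignType.sign (|a| ^ p + |b| ^ p - |a - b| ^ p) = SignType.sign (a * b) := by
  rcases lt_trichotomy a 0 with ha | rfl | ha
  · have h := sign_rpow_defect_of_pos hp (neg_pos.2 ha) (-b)
    rwa [abs_neg, abs_neg, neg_sub_neg, abs_sub_comm, neg_mul_neg] at h
  · simp [zero_rpow (by linarith : p ≠ 0)]
  · exact sign_rpow_defect_of_pos hp ha b

end RpowDefect

lemma three_le_finrank_of_inner_eq_zero {E : Type*} [NormedAddCommGroup E]
    [InnerProductSpace ℝ E] [FiniteDimensional ℝ E] {a b c : E} (ha : a ≠ 0) (hb : b ≠ 0)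
    (hc : c ≠ 0) (hab : inner ℝ a b = 0) (hac : inner ℝ a c = 0) (hbc : inner ℝ b c = 0) :
    3 ≤ Module.finrank ℝ E := by
  have hli : LinearIndependent ℝ ![a, b, c] := by
    refine linearIndependent_of_ne_zero_of_inner_eq_zero ?_ ?_
    · intro i
      fin_cases i
      exacts [ha, hb, hc]
    · intro i j hij
      fin_cases i <;> fin_cases j <;> simp at hij ⊢
      exacts [hab, hac, (real_inner_comm _ _).trans hab, hbc, (real_inner_comm _ _).trans hac,
        (real_inner_comm _ _).trans hbc]
  simpa using hli.fintype_card_le_finrank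

section SignVec

variable {ι : Type*} {p : ℝ}

noncomputable def signVec (x : ι → ℝ) : EuclideanSpace ℝ ι :=
  WithLp.toLp 2 fun i => (SignType.sign (x i) : ℝ)

lemma signVec_ne_zero {x : ι → ℝ} (hx : x ≠ 0) : signVec x ≠ 0 := by
  obtain ⟨i, hi⟩ := Function.ne_iff.1 hx
  intro h
  have hsi : (SignType.sign (x i) : ℝ) = 0 := congrArg (fun v : EuclideanSpace ℝ ι => v i) h
  exact hi (by rw [← sign_mul_abs (x i), hsi, zero_mul]; rfl)

lemma inner_signVec_eq_zero (hp : 1 < p) {x y : Fin 2 → ℝ}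
    (h : ∑ i, |x i - y i| ^ p = ∑ i, |x i| ^ p + ∑ i, |y i| ^ p) :
    inner ℝ (signVec x) (signVec y) = 0 := by
  have hdefect : |x 0| ^ p + |y 0| ^ p - |x 0 - y 0| ^ p
      = -(|x 1| ^ p + |y 1| ^ p - |x 1 - y 1| ^ p) := by
    simp only [Fin.sum_univ_two] at h; linarith
  have hsign : SignType.sign (x 0 * y 0) = -SignType.sign (x 1 * y 1) := by
    rw [← sign_rpow_defect hp, ← sign_rpow_defect hp, ← Left.sign_neg, hdefect]
  have hsign' := congrArg (fun s : SignType => (s : ℝ)) hsign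
  simp only [sign_mul, SignType.coe_mul, SignType.coe_neg] at hsign'
  simp only [signVec, PiLp.inner_apply, Fin.sum_univ_two, RCLike.inner_apply, conj_trivial]
  linarith

lemma sum_abs_rpow_eq_of_rpow_one_div_eq [Fintype ι] {c : ℝ} (hp : p ≠ 0) (hc : 0 ≤ c) {x : ι → ℝ}
    (h : (∑ i, |x i| ^ p) ^ (1 / p) = c ^ (1 / p)) : ∑ i, |x i| ^ p = c :=
  (rpow_left_inj (Finset.sum_nonneg fun _ _ => rpow_nonneg (abs_nonneg _) _) hc
    (one_div_ne_zero hp)).1 h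

lemma sum_abs_rpow_eq_one [Fintype ι] {x : ι → ℝ} (hp : p ≠ 0) (hx : (∑ i, |x i| ^ p) ^ (1 / p) = 1) :
    ∑ i, |x i| ^ p = 1 :=
  sum_abs_rpow_eq_of_rpow_one_div_eq hp zero_le_one (hx.trans (one_rpow _).symm)

lemma signVec_ne_zero_of_lp_norm_eq_one [Fintype ι] {x : ι → ℝ} (hp : p ≠ 0)
    (hx : (∑ i, |x i| ^ p) ^ (1 / p) = 1) : signVec x ≠ 0 := by
  refine signVec_ne_zero ?_
  rintro rfl
  simpa [zero_rpow hp] using sum_abs_rpow_eq_one hp hx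

lemma inner_signVec_eq_zero_of_lp_dist_eq (hp : 1 < p) {x y : Fin 2 → ℝ}
    (hx : (∑ i, |x i| ^ p) ^ (1 / p) = 1) (hy : (∑ i, |y i| ^ p) ^ (1 / p) = 1)
    (hxy : (∑ i, |x i - y i| ^ p) ^ (1 / p) = (2 : ℝ) ^ (1 / p)) :
    inner ℝ (signVec x) (signVec y) = 0 := by
  have hp0 : p ≠ 0 := (zero_lt_one.trans hp).ne'
  have hdist : ∑ i, |x i - y i| ^ p = 2 :=
    sum_abs_rpow_eq_of_rpow_one_div_eq (x := x - y) hp0 zero_le_two hxy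
  refine inner_signVec_eq_zero hp ?_
  rw [sum_abs_rpow_eq_one hp0 hx, sum_abs_rpow_eq_one hp0 hy, hdist]
  norm_num

end SignVec

/-- For `1 < p < ∞` there is no set of three points on the unit circle of `ℓ_p^2`
whose pairwise `ℓ_p`-distances all equal `2^(1/p)`. -/
theorem no_three_points_on_lp_circle (p : ℝ) (hp : 1 < p) :
    ¬ ∃ u v w : Fin 2 → ℝ, u ≠ v ∧ u ≠ w ∧ v ≠ w ∧
      (∑ i, |u i| ^ p) ^ (1 / p) = 1 ∧
      (∑ i, |v i| ^ p) ^ (1 / p) = 1 ∧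
      (∑ i, |w i| ^ p) ^ (1 / p) = 1 ∧
      (∑ i, |u i - v i| ^ p) ^ (1 / p) = (2 : ℝ) ^ (1 / p) ∧
      (∑ i, |u i - w i| ^ p) ^ (1 / p) = (2 : ℝ) ^ (1 / p) ∧
      (∑ i, |v i - w i| ^ p) ^ (1 / p) = (2 : ℝ) ^ (1 / p) := by
  rintro ⟨u, v, w, -, -, -, hu, hv, hw, huv, huw, hvw⟩
  have hp0 : p ≠ 0 := (zero_lt_one.trans hp).ne'
  have h3 := three_le_finrank_of_inner_eq_zero
    (signVec_ne_zero_of_lp_norm_eq_one hp0 hu) (signVec_ne_zero_of_lp_norm_eq_one hp0 hv)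
    (signVec_ne_zero_of_lp_norm_eq_one hp0 hw) (inner_signVec_eq_zero_of_lp_dist_eq hp hu hv huv)
    (inner_signVec_eq_zero_of_lp_dist_eq hp hu hw huw)
    (inner_signVec_eq_zero_of_lp_dist_eq hp hv hw hvw)
  simp at h3
end

section
/- For every p with 1 < p ≤ log 3 / log 2 and every d ≥ 1, there exists an equilateral set in ℓ_p^d of cardinality ⌊4d/3⌋. -/
set_option maxHeartbeats 1000000

open Real

/-- Auxiliary: a set of `k` points in `ℝ^d`, each of `p`-norm (to the `p`) `N`,
with all pairwise `p`-distances (to the `p`) equal to `2N`. -/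
def GoodSet (p N : ℝ) (d k : ℕ) : Prop :=
  ∃ S : Finset (Fin d → ℝ), S.card = k ∧
    (∀ x ∈ S, ∑ i, |x i| ^ p = N) ∧
    (∀ x ∈ S, ∀ y ∈ S, x ≠ y → ∑ i, |x i - y i| ^ p = 2 * N)

lemma goodSet_zero (p N : ℝ) : GoodSet p N 0 0 :=
  ⟨∅, by simp, by simp, by simp⟩

lemma goodSet_step (p N : ℝ) (hpne : p ≠ 0) (hN : 0 < N) (n j : ℕ)
    (u : Fin j → Fin n → ℝ)
    (hu1 : ∀ l, ∑ q, |u l q| ^ p = N)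
    (hu2 : ∀ l l', l ≠ l' → ∑ q, |u l q - u l' q| ^ p = 2 * N)
    {d k : ℕ} (h : GoodSet p N d k) : GoodSet p N (d + n) (k + j) := by
  obtain ⟨S, hcard, hnorm, hdist⟩ := h
  have h0p : (0:ℝ) ^ p = 0 := Real.zero_rpow hpne
  set ext : (Fin d → ℝ) → (Fin (d + n) → ℝ) := fun x => Fin.append x 0 with hext
  set pts : Fin j → (Fin (d + n) → ℝ) := fun l => Fin.append 0 (u l) with hpts
  -- generic sum splitting
  have hsum : ∀ (x : Fin d → ℝ) (v : Fin n → ℝ) (y : Fin d → ℝ) (w : Fin n → ℝ),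
      ∑ i : Fin (d + n), |Fin.append x v i - Fin.append y w i| ^ p
        = (∑ i : Fin d, |x i - y i| ^ p) + ∑ q : Fin n, |v q - w q| ^ p := by
    intro x v y w
    rw [Fin.sum_univ_add]
    simp only [Fin.append_left, Fin.append_right]
  have hsum1 : ∀ (x : Fin d → ℝ) (v : Fin n → ℝ),
      ∑ i : Fin (d + n), |Fin.append x v i| ^ p
        = (∑ i : Fin d, |x i| ^ p) + ∑ q : Fin n, |v q| ^ p := by
    intro x v
    rw [Fin.sum_univ_add]
    simp only [Fin.append_left, Fin.append_right]
  -- distances between the various kinds of points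
  have dEE : ∀ x y : Fin d → ℝ,
      ∑ i : Fin (d + n), |ext x i - ext y i| ^ p = ∑ i : Fin d, |x i - y i| ^ p := by
    intro x y
    rw [hext]
    simp only []
    rw [hsum x 0 y 0]
    simp [h0p]
  have dEP : ∀ x : Fin d → ℝ, ∀ l : Fin j, x ∈ S →
      ∑ i : Fin (d + n), |ext x i - pts l i| ^ p = 2 * N := by
    intro x l hx
    rw [hext, hpts]
    simp only []
    rw [hsum x 0 0 (u l)]
    simp only [Pi.zero_apply, sub_zero, zero_sub, abs_neg]
    rw [hnorm x hx, hu1 l]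
    ring
  have dPE : ∀ x : Fin d → ℝ, ∀ l : Fin j, x ∈ S →
      ∑ i : Fin (d + n), |pts l i - ext x i| ^ p = 2 * N := by
    intro x l hx
    have := dEP x l hx
    rw [← this]
    apply Finset.sum_congr rfl
    intro i _
    rw [abs_sub_comm]
  have dPP : ∀ l l' : Fin j, l ≠ l' →
      ∑ i : Fin (d + n), |pts l i - pts l' i| ^ p = 2 * N := by
    intro l l' hll
    rw [hpts]
    simp only []
    rw [hsum 0 (u l) 0 (u l')]
    simp only [Pi.zero_apply, sub_zero, sub_self, abs_zero, h0p, Finset.sum_const_zero]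
    rw [hu2 l l' hll]
    ring
  -- injectivity facts
  have hext_inj : Function.Injective ext := by
    intro a b hab
    funext i
    have := congrFun hab (Fin.castAdd n i)
    simpa only [hext, Fin.append_left] using this
  have hpts_inj : Function.Injective pts := by
    intro l l' hll
    by_contra hne
    have h2 := dPP l l' hne
    rw [hll] at h2
    simp only [sub_self, abs_zero, h0p, Finset.sum_const_zero] at h2
    linarith
  have hdisj : Disjoint (S.image ext) (Finset.image pts Finset.univ) := by
    rw [Finset.disjoint_left]
    intro a ha hb
    obtain ⟨x, hx, hex⟩ := Finset.mem_image.mp ha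
    obtain ⟨l, _, hl⟩ := Finset.mem_image.mp hb
    have heq : ext x = pts l := by rw [hex, hl]
    have h2 := dEP x l hx
    rw [heq] at h2
    simp only [sub_self, abs_zero, h0p, Finset.sum_const_zero] at h2
    linarith
  refine ⟨S.image ext ∪ Finset.image pts Finset.univ, ?_, ?_, ?_⟩
  · rw [Finset.card_union_of_disjoint hdisj, Finset.card_image_of_injective S hext_inj,
      Finset.card_image_of_injective _ hpts_inj, hcard, Finset.card_univ, Fintype.card_fin]
  · intro x hx
    rcases Finset.mem_union.mp hx with hx | hx
    · obtain ⟨a, ha, rfl⟩ := Finset.mem_image.mp hx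
      rw [hext]
      simp only []
      rw [hsum1 a 0]
      simp only [Pi.zero_apply, abs_zero, h0p, Finset.sum_const_zero, add_zero]
      exact hnorm a ha
    · obtain ⟨l, _, rfl⟩ := Finset.mem_image.mp hx
      rw [hpts]
      simp only []
      rw [hsum1 0 (u l)]
      simp only [Pi.zero_apply, abs_zero, h0p, Finset.sum_const_zero, zero_add]
      exact hu1 l
  · intro x hx y hy hxy
    rcases Finset.mem_union.mp hx with hx | hx <;> rcases Finset.mem_union.mp hy with hy | hy
    · obtain ⟨a, ha, rfl⟩ := Finset.mem_image.mp hx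
      obtain ⟨b, hb, rfl⟩ := Finset.mem_image.mp hy
      have hab : a ≠ b := fun hab => hxy (by rw [hab])
      rw [dEE a b]
      exact hdist a ha b hb hab
    · obtain ⟨a, ha, rfl⟩ := Finset.mem_image.mp hx
      obtain ⟨l, _, rfl⟩ := Finset.mem_image.mp hy
      exact dEP a l ha
    · obtain ⟨l, _, rfl⟩ := Finset.mem_image.mp hx
      obtain ⟨a, ha, rfl⟩ := Finset.mem_image.mp hy
      exact dPE a l ha
    · obtain ⟨l, _, rfl⟩ := Finset.mem_image.mp hx
      obtain ⟨l', _, rfl⟩ := Finset.mem_image.mp hy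
      have hll : l ≠ l' := fun h => hxy (by rw [h])
      exact dPP l l' hll

/-- The 4-point gadget in `ℝ^3`. -/
lemma gadget (p : ℝ) (hp1 : 1 < p) (h23 : (2:ℝ) ^ p ≤ 3) :
    ∃ N : ℝ, 0 < N ∧ ∃ u : Fin 4 → Fin 3 → ℝ,
      (∀ l, ∑ q, |u l q| ^ p = N) ∧
      (∀ l l', l ≠ l' → ∑ q, |u l q - u l' q| ^ p = 2 * N) := by
  have hp0 : 0 < p := lt_trans one_pos hp1
  have hpne : p ≠ 0 := ne_of_gt hp0
  have hA2 : (2:ℝ) < 2 ^ p := by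
    have := (Real.rpow_lt_rpow_left_iff one_lt_two).mpr hp1
    rwa [Real.rpow_one] at this
  have h0p : (0:ℝ) ^ p = 0 := Real.zero_rpow hpne
  -- the IVT function
  set φ : ℝ → ℝ := fun t => |1 + t| ^ p + |1 - t| ^ p - 2 ^ p * (2 - 2 ^ p / 2) * (1 + |t| ^ p)
    with hφ
  have hrp : Continuous fun x : ℝ => x ^ p :=
    continuous_iff_continuousAt.mpr fun x => Real.continuousAt_rpow_const x p (Or.inr hp0.le)
  have hcont : Continuous φ := by
    apply Continuous.sub
    · exact (hrp.comp (continuous_const.add continuous_id).abs).add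
        (hrp.comp (continuous_const.sub continuous_id).abs)
    · exact continuous_const.mul (continuous_const.add (hrp.comp continuous_abs))
  have hφ0 : 0 ≤ φ 0 := by
    simp only [hφ]
    norm_num [h0p]
    nlinarith [sq_nonneg ((2:ℝ) ^ p - 2)]
  have hφ1 : φ 1 ≤ 0 := by
    simp only [hφ]
    norm_num [h0p, abs_two]
    nlinarith [mul_nonpos_of_nonneg_of_nonpos
      (by linarith : (0:ℝ) ≤ 2 ^ p) (by linarith : (2:ℝ) ^ p - 3 ≤ 0)]
  obtain ⟨τ, hτmem, hφτ⟩ := intermediate_value_Icc' (by norm_num : (0:ℝ) ≤ 1)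
    hcont.continuousOn ⟨hφ1, hφ0⟩
  obtain ⟨hτ0, hτ1⟩ := hτmem
  have hkey : (1 + τ) ^ p + (1 - τ) ^ p = 2 ^ p * (2 - 2 ^ p / 2) * (1 + τ ^ p) := by
    have h1 : |1 + τ| = 1 + τ := abs_of_nonneg (by linarith)
    have h2 : |1 - τ| = 1 - τ := abs_of_nonneg (by linarith)
    have h3 : |τ| = τ := abs_of_nonneg hτ0
    simp only [hφ, h1, h2, h3] at hφτ
    linarith
  have htp0 : 0 ≤ τ ^ p := Real.rpow_nonneg hτ0 p
  have hzarg : 0 ≤ (2 ^ p / 2 - 1) * (1 + τ ^ p) := by nlinarith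
  obtain ⟨z, hz0, hzp⟩ : ∃ z : ℝ, 0 ≤ z ∧ z ^ p = (2 ^ p / 2 - 1) * (1 + τ ^ p) :=
    ⟨((2 ^ p / 2 - 1) * (1 + τ ^ p)) ^ (1 / p), Real.rpow_nonneg hzarg _, by
      rw [one_div, Real.rpow_inv_rpow hzarg hpne]⟩
  have eτ : |τ| = τ := abs_of_nonneg hτ0
  have ez : |z| = z := abs_of_nonneg hz0
  have a1 : |1 + τ| = 1 + τ := abs_of_nonneg (by linarith)
  have a2 : |τ - 1| = 1 - τ := by rw [abs_of_nonpos (by linarith)]; ring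
  have a3 : |z + z| = 2 * z := by rw [abs_of_nonneg (by linarith)]; ring
  have a4 : |(1:ℝ) + 1| = 2 := by norm_num
  have a5 : |τ + τ| = 2 * τ := by rw [abs_of_nonneg (by linarith)]; ring
  have a6 : |1 - τ| = 1 - τ := abs_of_nonneg (by linarith)
  have a7 : |τ + 1| = 1 + τ := by rw [abs_of_nonneg (by linarith)]; ring
  have a8 : |-τ - 1| = 1 + τ := by rw [abs_of_nonpos (by linarith)]; ring
  have a9 : |-τ + 1| = 1 - τ := by rw [abs_of_nonneg (by linarith)]; ring
  have a10 : |-z - z| = 2 * z := by rw [abs_of_nonpos (by linarith)]; ring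
  have a11 : |(-1:ℝ) - 1| = 2 := by norm_num
  have a12 : |-τ - τ| = 2 * τ := by rw [abs_of_nonpos (by linarith)]; ring
  have a13 : |-1 + τ| = 1 - τ := by rw [abs_of_nonpos (by linarith)]; ring
  have a14 : |-1 - τ| = 1 + τ := by rw [abs_of_nonpos (by linarith)]; ring
  have g1 : (2 * z) ^ p = 2 ^ p * z ^ p := Real.mul_rpow (by norm_num) hz0
  have g2 : (2 * τ) ^ p = 2 ^ p * τ ^ p := Real.mul_rpow (by norm_num) hτ0
  refine ⟨2 ^ p / 2 * (1 + τ ^ p), by nlinarith,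
    ![![1, τ, z], ![-τ, 1, -z], ![-1, -τ, z], ![τ, -1, -z]], ?_, ?_⟩
  · -- norms
    intro l
    fin_cases l <;>
      · simp [Fin.sum_univ_three]
        simp only [eτ, ez, g1, g2]
        linear_combination hzp
  · -- distances
    intro l l' hne
    fin_cases l <;> fin_cases l' <;>
      first
        | exact absurd rfl hne
        | (simp [Fin.sum_univ_three]; simp only [a1, a2, a3, a4, a5, a6, a7, a8, a9, a10, a11, a12, a13, a14, eτ, ez, g1, g2, h0p]; try ring; try linear_combination hkey + (2:ℝ) ^ p * hzp)

/-- For `1 < p ≤ log 3 / log 2` and `d ≥ 1` the space `ℓ_p^d` contains an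
equilateral set of `⌊4d/3⌋` points. -/
theorem equilateral_four_thirds (p : ℝ) (hp1 : 1 < p)
    (hp2 : p ≤ Real.log 3 / Real.log 2) (d : ℕ) (hd : 1 ≤ d) :
    ∃ S : Finset (Fin d → ℝ), ∃ lam : ℝ, 0 < lam ∧ IsEquilateralLp p lam S ∧
      S.card = 4 * d / 3 := by
  have hp0 : 0 < p := lt_trans one_pos hp1
  have hpne : p ≠ 0 := ne_of_gt hp0
  have h23 : (2:ℝ) ^ p ≤ 3 := by
    have h2 : (2:ℝ) ^ p ≤ 2 ^ (Real.log 3 / Real.log 2) :=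
      (Real.rpow_le_rpow_left_iff one_lt_two).mpr hp2
    rwa [Real.log_div_log, Real.rpow_logb two_pos (by norm_num) (by norm_num)] at h2
  obtain ⟨N, hN, u, hu1, hu2⟩ := gadget p hp1 h23
  set α : ℝ := N ^ (1 / p) with hαdef
  have hα0 : 0 ≤ α := Real.rpow_nonneg hN.le _
  have hαp : α ^ p = N := by rw [hαdef, one_div, Real.rpow_inv_rpow hN.le hpne]
  have hsingle : ∀ {d' k : ℕ}, GoodSet p N d' k → GoodSet p N (d' + 1) (k + 1) := by
    intro d' k h
    refine goodSet_step p N hpne hN 1 1 (fun _ _ => α) ?_ ?_ h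
    · intro l
      rw [Fin.sum_univ_one, abs_of_nonneg hα0, hαp]
    · intro l l' hll
      exact absurd (Subsingleton.elim l l') hll
  have hblock : ∀ {d' k : ℕ}, GoodSet p N d' k → GoodSet p N (d' + 3) (k + 4) :=
    fun h => goodSet_step p N hpne hN 3 4 u hu1 hu2 h
  have hbase : ∀ r : ℕ, GoodSet p N r r := by
    intro r
    induction r with
    | zero => exact goodSet_zero p N
    | succ n ih => exact hsingle ih
  have hmain : ∀ m r : ℕ, GoodSet p N (3 * m + r) (4 * m + r) := by
    intro m r
    induction m with
    | zero => simpa using hbase r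
    | succ n ih =>
      have h1 : 3 * (n + 1) + r = 3 * n + r + 3 := by ring
      have h2 : 4 * (n + 1) + r = 4 * n + r + 4 := by ring
      rw [h1, h2]
      exact hblock ih
  have hd3 : 3 * (d / 3) + d % 3 = d := Nat.div_add_mod d 3
  rw [← hd3]
  obtain ⟨S, hcard, hnorm, hdist⟩ := hmain (d / 3) (d % 3)
  refine ⟨S, (2 * N) ^ (1 / p), Real.rpow_pos_of_pos (by linarith) _, ?_, ?_⟩
  · intro x hx y hy hxy
    rw [hdist x hx y hy hxy]
  · rw [hcard]
    omega
end
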